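/- arXiv:0808.0146 — 5 statements merged into one kernel-verified Lean document; each statement's English description precedes it below -/
import Mathlib

section
/- Let (M,ρ,μ) be a metric measure space satisfying the isoperimetric property: there exist κ₀ > 0 and C > 0 such that μ(A_κ) ≥ C·κ·μ(A) for every bounded open set A and every κ ∈ (0,κ₀], where A_κ = {x ∈ A : dist(x, Aᶜ) ≤ κ}. Then the same inequality μ(A_κ) ≥ C·κ·μ(A) holds for every open set A of finite measure (not necessarily bounded). -/
open MeasureTheory Metric Set Filter Topology

/-- If `(M,ρ,μ)` satisfies the isoperimetric property (I) for bounded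
open sets (with constants `κ₀, C`), then the same inequality holds for every open set of
finite measure.  Here `A_κ = {x ∈ A : dist(x, Aᶜ) ≤ κ}`. -/
theorem isoperimetric_of_finite_measure
    {M : Type*} [MetricSpace M] [MeasurableSpace M] [BorelSpace M]
    (μ : Measure M)
    (hpos : μ Set.univ ≠ 0)
    (hballs : ∀ (x : M) (r : ℝ), μ (Metric.ball x r) < ⊤)
    (κ₀ C : ℝ) (hκ₀ : 0 < κ₀) (hC : 0 < C)
    (hI : ∀ A : Set M, IsOpen A → Bornology.IsBounded A →
      ∀ κ : ℝ, 0 < κ → κ ≤ κ₀ →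
        ENNReal.ofReal (C * κ) * μ A ≤ μ {x | x ∈ A ∧ Metric.infDist x Aᶜ ≤ κ}) :
    ∀ A : Set M, IsOpen A → μ A < ⊤ →
      ∀ κ : ℝ, 0 < κ → κ ≤ κ₀ →
        ENNReal.ofReal (C * κ) * μ A ≤ μ {x | x ∈ A ∧ Metric.infDist x Aᶜ ≤ κ} := by
  intro A hA hAfin κ hκ hκκ₀
  have hM : Nonempty M := by
    by_contra h
    rw [not_nonempty_iff] at h
    exact hpos (by simp [Set.univ_eq_empty_iff.2 h])
  obtain ⟨x₀⟩ := hM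
  set L : Set M := {x | x ∈ A ∧ Metric.infDist x Aᶜ ≤ κ} with hLdef
  -- Key inequality for each truncation
  have key : ∀ n : ℕ, ENNReal.ofReal (C * κ) * μ (A ∩ ball x₀ n)
      ≤ μ L + μ (A \ ball x₀ ((n : ℝ) - κ)) := by
    intro n
    have hopen : IsOpen (A ∩ ball x₀ n) := hA.inter isOpen_ball
    have hbdd : Bornology.IsBounded (A ∩ ball x₀ n) :=
      isBounded_ball.subset inter_subset_right
    have h1 := hI _ hopen hbdd κ hκ hκκ₀
    refine h1.trans ?_
    have hsub : {x | x ∈ A ∩ ball x₀ n ∧ Metric.infDist x (A ∩ ball x₀ n)ᶜ ≤ κ}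
        ⊆ L ∪ (A \ ball x₀ ((n : ℝ) - κ)) := by
      rintro x ⟨⟨hxA, hxb⟩, hxd⟩
      by_cases hxB : x ∈ ball x₀ ((n : ℝ) - κ)
      · left
        refine ⟨hxA, ?_⟩
        rcases eq_empty_or_nonempty Aᶜ with hAc | hAc
        · rw [hAc, Metric.infDist_empty]; exact hκ.le
        · have hne : ((A ∩ ball x₀ n)ᶜ).Nonempty :=
            hAc.mono (compl_subset_compl.2 inter_subset_left)
          have hδ : 0 < (n : ℝ) - κ - dist x x₀ := by
            rw [mem_ball] at hxB; linarith
          refine le_of_forall_pos_le_add fun ε hε => ?_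
          set ε' : ℝ := min ε (((n : ℝ) - κ - dist x x₀) / 2) with hε'def
          have hε'pos : 0 < ε' := lt_min hε (by linarith)
          have hlt : Metric.infDist x (A ∩ ball x₀ n)ᶜ < κ + ε' :=
            lt_of_le_of_lt hxd (by linarith)
          obtain ⟨y, hy, hyd⟩ := (Metric.infDist_lt_iff hne).1 hlt
          have hy' : y ∉ A ∨ y ∉ ball x₀ n := by
            rw [mem_compl_iff, mem_inter_iff] at hy; tauto
          rcases hy' with hyA | hyB
          · have h2 : Metric.infDist x Aᶜ ≤ dist x y := Metric.infDist_le_dist_of_mem hyA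
            have : ε' ≤ ε := min_le_left _ _
            linarith
          · exfalso
            rw [mem_ball, not_lt] at hyB
            have h3 : dist y x₀ - dist x x₀ ≤ dist x y := by
              have := dist_triangle y x x₀
              rw [dist_comm y x] at this
              linarith
            have h4 : ε' ≤ ((n : ℝ) - κ - dist x x₀) / 2 := min_le_right _ _
            linarith
      · right; exact ⟨hxA, hxB⟩
    calc μ {x | x ∈ A ∩ ball x₀ n ∧ Metric.infDist x (A ∩ ball x₀ n)ᶜ ≤ κ}
        ≤ μ (L ∪ (A \ ball x₀ ((n : ℝ) - κ))) := measure_mono hsub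
      _ ≤ μ L + μ (A \ ball x₀ ((n : ℝ) - κ)) := measure_union_le _ _
  -- Limits
  have hU : (⋃ n : ℕ, A ∩ ball x₀ n) = A := by
    ext x
    simp only [mem_iUnion, mem_inter_iff, mem_ball]
    constructor
    · rintro ⟨n, h, _⟩; exact h
    · intro h
      obtain ⟨n, hn⟩ := exists_nat_gt (dist x x₀)
      exact ⟨n, h, hn⟩
  have hmono : Monotone fun n : ℕ => A ∩ ball x₀ n := fun m n hmn =>
    inter_subset_inter_right _ (ball_subset_ball (by exact_mod_cast hmn))
  have t1 : Tendsto (fun n : ℕ => μ (A ∩ ball x₀ n)) atTop (𝓝 (μ A)) := by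
    have := tendsto_measure_iUnion_atTop (μ := μ) hmono
    rwa [hU] at this
  have t2 : Tendsto (fun n : ℕ => μ (A \ ball x₀ ((n : ℝ) - κ))) atTop (𝓝 0) := by
    have hanti : Antitone fun n : ℕ => A \ ball x₀ ((n : ℝ) - κ) := by
      intro m n hmn
      exact diff_subset_diff_right (ball_subset_ball (by
        have : (m : ℝ) ≤ n := by exact_mod_cast hmn
        linarith))
    have hiInter : (⋂ n : ℕ, A \ ball x₀ ((n : ℝ) - κ)) = ∅ := by
      ext x
      simp only [mem_iInter, mem_diff, mem_ball, mem_empty_iff_false, iff_false, not_forall]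
      obtain ⟨n, hn⟩ := exists_nat_gt (dist x x₀ + κ)
      exact ⟨n, fun h => h.2 (by linarith)⟩
    have hmeas : ∀ n : ℕ, NullMeasurableSet (A \ ball x₀ ((n : ℝ) - κ)) μ :=
      fun n => ((hA.measurableSet.diff measurableSet_ball)).nullMeasurableSet
    have hfin : ∃ n : ℕ, μ (A \ ball x₀ ((n : ℝ) - κ)) ≠ ⊤ :=
      ⟨0, (lt_of_le_of_lt (measure_mono diff_subset) hAfin).ne⟩
    have := tendsto_measure_iInter_atTop hmeas hanti hfin
    rwa [hiInter, measure_empty] at this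
  have t3 : Tendsto (fun n : ℕ => ENNReal.ofReal (C * κ) * μ (A ∩ ball x₀ n)) atTop
      (𝓝 (ENNReal.ofReal (C * κ) * μ A)) :=
    ENNReal.Tendsto.const_mul t1 (Or.inr ENNReal.ofReal_ne_top)
  have t4 : Tendsto (fun n : ℕ => μ L + μ (A \ ball x₀ ((n : ℝ) - κ))) atTop (𝓝 (μ L + 0)) :=
    tendsto_const_nhds.add t2
  have hfinal := le_of_tendsto_of_tendsto' t3 t4 key
  simpa using hfinal
end

section
/- Let (M,ρ,μ) be an unbounded metric measure space with the isoperimetric property (I) with constants C > 0 and κ₀ > 0. Then the volume of balls grows at least exponentially: there exist η > 1 and c > 0 such that for a fixed reference point o and all sufficiently large r, μ(B(o,r)) ≥ c·η^{r/κ₀}. -/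
/-!
Let `A = B(o, r)`. Every point of the smaller ball `B(o, r - κ₀)` lies at distance more than `κ₀`
from `Aᶜ`, so it avoids the boundary layer `A_κ₀`. Property (I) gives `μ(A_κ₀) ≥ Cκ₀ μ(A)`, whence
`(1 + Cκ₀) μ(B(o, r - κ₀)) ≤ μ(B(o, r))`. Iterating from a ball of positive measure, every step
`κ₀` in the radius multiplies the volume by at least `η = 1 + Cκ₀`.
-/

open MeasureTheory Metric Set

open scoped ENNReal

section Growth

variable {f : ℝ → ℝ≥0∞} {κ η m r₀ : ℝ}

theorem ofReal_pow_mul_le_of_le_shift (hη : 0 ≤ η) (h₀ : ENNReal.ofReal m ≤ f r₀)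
    (hstep : ∀ r, ENNReal.ofReal η * f (r - κ) ≤ f r) (n : ℕ) :
    ENNReal.ofReal (η ^ n * m) ≤ f (r₀ + n * κ) := by
  induction n with
  | zero => simpa using h₀
  | succ n ih =>
    calc ENNReal.ofReal (η ^ (n + 1) * m)
        = ENNReal.ofReal η * ENNReal.ofReal (η ^ n * m) := by
          rw [← ENNReal.ofReal_mul hη, pow_succ, mul_comm _ η, mul_assoc]
      _ ≤ ENNReal.ofReal η * f (r₀ + (n + 1 : ℕ) * κ - κ) := by
          rw [Nat.cast_succ, add_one_mul, ← add_assoc, add_sub_cancel_right]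
          gcongr
      _ ≤ f (r₀ + (n + 1 : ℕ) * κ) := hstep _

theorem exists_ofReal_mul_rpow_le_of_le_shift (hf : Monotone f) (hκ : 0 < κ) (hη : 1 ≤ η)
    (hm : 0 < m) (h₀ : ENNReal.ofReal m ≤ f r₀)
    (hstep : ∀ r, ENNReal.ofReal η * f (r - κ) ≤ f r) :
    ∃ c : ℝ, 0 < c ∧ ∀ r, r₀ ≤ r → ENNReal.ofReal (c * η ^ (r / κ)) ≤ f r := by
  have hη₀ : 0 < η := by linarith
  refine ⟨m * η ^ (-(r₀ / κ + 1)), by positivity, fun r hr => ?_⟩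
  set n := ⌊(r - r₀) / κ⌋₊
  have hn : (n : ℝ) * κ ≤ r - r₀ := (le_div_iff₀ hκ).1 (Nat.floor_le (by positivity))
  have hexp : (r - r₀) / κ - 1 ≤ n := by linarith [Nat.lt_floor_add_one ((r - r₀) / κ)]
  calc ENNReal.ofReal (m * η ^ (-(r₀ / κ + 1)) * η ^ (r / κ))
      = ENNReal.ofReal (η ^ ((r - r₀) / κ - 1) * m) := by
        rw [mul_assoc, ← Real.rpow_add hη₀, mul_comm]
        congr 3
        field_simp
        ring
    _ ≤ ENNReal.ofReal (η ^ n * m) := by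
        gcongr
        exact_mod_cast Real.rpow_le_rpow_of_exponent_le hη hexp
    _ ≤ f (r₀ + n * κ) := ofReal_pow_mul_le_of_le_shift hη₀.le h₀ hstep n
    _ ≤ f r := hf (by linarith)

end Growth

section Layer

variable {X : Type*} [PseudoMetricSpace X]

theorem sub_dist_le_infDist_compl_ball {o : X} {r : ℝ} (hne : (ball o r)ᶜ.Nonempty) (x : X) :
    r - dist x o ≤ infDist x (ball o r)ᶜ := by
  refine (le_infDist hne).2 fun y hy => ?_
  have hy : r ≤ dist y o := not_lt.1 hy
  linarith [dist_triangle y x o, dist_comm x y]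

theorem disjoint_layer_ball_sub {o : X} {r κ : ℝ} (hne : (ball o r)ᶜ.Nonempty) :
    Disjoint {x | x ∈ ball o r ∧ infDist x (ball o r)ᶜ ≤ κ} (ball o (r - κ)) := by
  refine disjoint_left.2 fun x hx hx' => ?_
  have := sub_dist_le_infDist_compl_ball hne x
  linarith [hx.2, mem_ball.1 hx']

theorem one_add_mul_measure_ball_sub_le [MeasurableSpace X] [OpensMeasurableSpace X]
    {μ : Measure X} {o : X} {r κ : ℝ} {a : ℝ≥0∞} (hne : (ball o r)ᶜ.Nonempty) (hκ : 0 ≤ κ)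
    (hlayer : a * μ (ball o r) ≤ μ {x | x ∈ ball o r ∧ infDist x (ball o r)ᶜ ≤ κ}) :
    (1 + a) * μ (ball o (r - κ)) ≤ μ (ball o r) := by
  have hsub : ball o (r - κ) ⊆ ball o r := ball_subset_ball (by linarith)
  calc (1 + a) * μ (ball o (r - κ)) = a * μ (ball o (r - κ)) + μ (ball o (r - κ)) := by
        rw [add_mul, one_mul, add_comm]
    _ ≤ a * μ (ball o r) + μ (ball o (r - κ)) := by gcongr
    _ ≤ μ {x | x ∈ ball o r ∧ infDist x (ball o r)ᶜ ≤ κ} + μ (ball o (r - κ)) := by gcongr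
    _ = μ ({x | x ∈ ball o r ∧ infDist x (ball o r)ᶜ ≤ κ} ∪ ball o (r - κ)) :=
        (measure_union (disjoint_layer_ball_sub hne) measurableSet_ball).symm
    _ ≤ μ (ball o r) := measure_mono (union_subset (fun _ hx => hx.1) hsub)

end Layer

theorem volume_growth_exponential_of_isoperimetric_general
    {M : Type*} [MetricSpace M] [MeasurableSpace M] [BorelSpace M]
    (μ : Measure M)
    (hpos : μ Set.univ ≠ 0)
    (hunb : ¬ Bornology.IsBounded (Set.univ : Set M))
    (κ₀ C : ℝ) (hκ₀ : 0 < κ₀) (hC : 0 < C)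
    (hI : ∀ A : Set M, IsOpen A → Bornology.IsBounded A →
      ∀ κ : ℝ, 0 < κ → κ ≤ κ₀ →
        ENNReal.ofReal (C * κ) * μ A ≤ μ {x | x ∈ A ∧ Metric.infDist x Aᶜ ≤ κ}) :
    ∀ o : M, ∃ η : ℝ, 1 < η ∧ ∃ c : ℝ, 0 < c ∧ ∃ R : ℝ, ∀ r : ℝ, R ≤ r →
      ENNReal.ofReal (c * η ^ (r / κ₀)) ≤ μ (Metric.ball o r) := by
  intro o
  have hCκ₀ : 0 < C * κ₀ := mul_pos hC hκ₀
  have hne (r : ℝ) : (ball o r)ᶜ.Nonempty :=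
    nonempty_compl.2 fun h => hunb (h ▸ isBounded_ball)
  have hstep (r : ℝ) :
      ENNReal.ofReal (1 + C * κ₀) * μ (ball o (r - κ₀)) ≤ μ (ball o r) := by
    rw [ENNReal.ofReal_add zero_le_one hCκ₀.le, ENNReal.ofReal_one]
    exact one_add_mul_measure_ball_sub_le (hne r) hκ₀.le
      (hI _ isOpen_ball isBounded_ball κ₀ hκ₀ le_rfl)
  obtain ⟨N, hN⟩ := exists_pos_ball o (Measure.measure_univ_ne_zero.1 hpos)
  obtain ⟨m, -, hm, hmN⟩ := ENNReal.lt_iff_exists_real_btwn.1 hN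
  obtain ⟨c, hc, hgrowth⟩ := exists_ofReal_mul_rpow_le_of_le_shift
    (fun _ _ h => measure_mono (ball_subset_ball h)) hκ₀ (by linarith)
    (ENNReal.ofReal_pos.1 hm) hmN.le hstep
  exact ⟨1 + C * κ₀, by linarith, c, hc, N, hgrowth⟩

/-- In an unbounded metric measure space with the isoperimetric
property (I) (constants `C > 0`, `κ₀ > 0`), the volume of balls grows at least
exponentially: for any reference point `o` there are `η > 1`, `c > 0` and `R` such that
`μ(B(o,r)) ≥ c·η^(r/κ₀)` for all `r ≥ R`. -/
theorem volume_growth_exponential_of_isoperimetric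
    {M : Type*} [MetricSpace M] [MeasurableSpace M] [BorelSpace M]
    (μ : Measure M)
    (hpos : μ Set.univ ≠ 0)
    (hballs : ∀ (x : M) (r : ℝ), μ (Metric.ball x r) < ⊤)
    (hunb : ¬ Bornology.IsBounded (Set.univ : Set M))
    (κ₀ C : ℝ) (hκ₀ : 0 < κ₀) (hC : 0 < C)
    (hI : ∀ A : Set M, IsOpen A → Bornology.IsBounded A →
      ∀ κ : ℝ, 0 < κ → κ ≤ κ₀ →
        ENNReal.ofReal (C * κ) * μ A ≤ μ {x | x ∈ A ∧ Metric.infDist x Aᶜ ≤ κ}) :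
    ∀ o : M, ∃ η : ℝ, 1 < η ∧ ∃ c : ℝ, 0 < c ∧ ∃ R : ℝ, ∀ r : ℝ, R ≤ r →
      ENNReal.ofReal (c * η ^ (r / κ₀)) ≤ μ (Metric.ball o r) :=
  volume_growth_exponential_of_isoperimetric_general μ hpos hunb κ₀ C hκ₀ hC hI
end

section
/- Let (M,ρ,μ) satisfy property (I), and let I_M = lim_{t→0⁺} C_t where C_t is the supremum of constants C such that μ(A_κ) ≥ C·κ·μ(A) for all bounded open A and all κ ∈ (0,t]. Then for every bounded open set A and every t > 0, μ(A_t) ≥ (1 − e^{−I_M·t})·μ(A). -/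
/-!
Let `f = dist(·, Aᶜ)` and `g(s) = μ {f > s}`. The superlevel sets `{f > s}` are bounded open
subsets of `A`, and as `f` is 1-Lipschitz their inner `κ`-layers lie in `{s < f ≤ s + κ}`. Hence
an admissible constant `c` gives `g(s + κ) ≤ (1 - cκ) g(s)` for all small `κ`, and `n` steps of
size `t / n` give `g(t) ≤ (1 - ct/n)ⁿ μ(A) ≤ e^{-ct} μ(A)`, that is
`μ(A_t) = μ(A) - g(t) ≥ (1 - e^{-ct}) μ(A)`. The bound passes to the supremum of the admissible
constants because it is monotone and continuous in `c`.
-/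

open MeasureTheory Metric Set

lemma measure_preimage_Ioi_eq_add {X : Type*} [MeasurableSpace X] (μ : Measure X) {f : X → ℝ}
    (hf : Measurable f) {s a : ℝ} (hsa : s ≤ a) :
    μ (f ⁻¹' Ioi s) = μ (f ⁻¹' Ioi a) + μ (f ⁻¹' Ioc s a) := by
  rw [← Ioc_union_Ioi_eq_Ioi hsa, preimage_union, add_comm,
    measure_union (Ioc_disjoint_Ioi_same.preimage f) (hf measurableSet_Ioi)]

lemma le_exp_neg_mul_mul_of_step {g : ℝ → ℝ} {c u t : ℝ} (hu : 0 < u) (ht : 0 < t)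
    (hg₀ : 0 ≤ g 0)
    (hstep : ∀ s κ, 0 ≤ s → 0 < κ → κ ≤ u → g (s + κ) ≤ (1 - c * κ) * g s) :
    g t ≤ Real.exp (-(c * t)) * g 0 := by
  -- `n ≥ t / u` makes `κ = t / n` an admissible step, `n ≥ c t` keeps `1 - c κ ≥ 0`.
  obtain ⟨n, hn⟩ := exists_nat_ge (max (t / u) (c * t))
  have hnu : t / u ≤ n := (le_max_left _ _).trans hn
  have hnc : c * t ≤ n := (le_max_right _ _).trans hn
  have hn₀ : (0 : ℝ) < n := (div_pos ht hu).trans_le hnu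
  set κ := t / n with hκ
  have hκ₀ : 0 < κ := div_pos ht hn₀
  have hκu : κ ≤ u := by
    rw [div_le_iff₀ hn₀]; rw [div_le_iff₀ hu] at hnu; nlinarith
  have hcκ : 0 ≤ 1 - c * κ := by
    rw [hκ, ← mul_div_assoc, sub_nonneg, div_le_one hn₀]; exact hnc
  have hiter : ∀ m : ℕ, g (m * κ) ≤ (1 - c * κ) ^ m * g 0 := by
    intro m
    induction m with
    | zero => simp
    | succ m ih =>
      calc g ((m + 1 : ℕ) * κ) = g (m * κ + κ) := by push_cast; ring_nf
        _ ≤ (1 - c * κ) * g (m * κ) := hstep _ _ (by positivity) hκ₀ hκu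
        _ ≤ (1 - c * κ) * ((1 - c * κ) ^ m * g 0) := mul_le_mul_of_nonneg_left ih hcκ
        _ = (1 - c * κ) ^ (m + 1) * g 0 := by ring
  calc g t = g (n * κ) := by rw [hκ, mul_div_cancel₀ _ hn₀.ne']
    _ ≤ (1 - c * κ) ^ n * g 0 := hiter n
    _ ≤ Real.exp (-(c * κ)) ^ n * g 0 := by
      gcongr
      linarith [Real.add_one_le_exp (-(c * κ))]
    _ = Real.exp (-(c * t)) * g 0 := by
      rw [← Real.exp_nat_mul, hκ]; congr 2; field_simp

lemma ofReal_one_sub_exp_csSup_mul_le {S : Set ℝ} (hS : S.Nonempty) {t : ℝ} (ht : 0 ≤ t)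
    {a b : ENNReal} (h : ∀ c ∈ S, ENNReal.ofReal (1 - Real.exp (-(c * t))) * a ≤ b) :
    ENNReal.ofReal (1 - Real.exp (-(sSup S * t))) * a ≤ b := by
  by_cases hbdd : BddAbove S
  swap
  · simp [Real.sSup_of_not_bddAbove hbdd]
  set φ : ℝ → ENNReal := fun c => ENNReal.ofReal (1 - Real.exp (-(c * t)))
  have hφ : Monotone φ := fun c d hcd => ENNReal.ofReal_le_ofReal (by gcongr)
  have hφc : Continuous φ := ENNReal.continuous_ofReal.comp (by fun_prop)
  change φ (sSup S) * a ≤ b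
  rw [hφ.map_csSup_of_continuousAt hφc.continuousAt hS hbdd, ENNReal.sSup_mul]
  exact iSup₂_le fun _ ⟨c, hc, hx⟩ => hx ▸ h c hc

section

variable {M : Type*} [MetricSpace M]

def innerLayer (A : Set M) (κ : ℝ) : Set M := {x | x ∈ A ∧ infDist x Aᶜ ≤ κ}

/-- Property (I) with constant `c` at all scales `κ ≤ u`; the paper's `C_u` is the supremum of
such `c`. -/
def HasIsoperimetricConst [MeasurableSpace M] (μ : Measure M) (c u : ℝ) : Prop :=
  ∀ B : Set M, IsOpen B → Bornology.IsBounded B → ∀ κ : ℝ, 0 < κ → κ ≤ u →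
    ENNReal.ofReal (c * κ) * μ B ≤ μ (innerLayer B κ)

lemma LipschitzWith.le_infDist_compl_preimage_Ioi_add {f : M → ℝ} (hf : LipschitzWith 1 f)
    {s : ℝ} (hne : (f ⁻¹' Ioi s)ᶜ.Nonempty) (x : M) :
    f x ≤ infDist x (f ⁻¹' Ioi s)ᶜ + s := by
  have : f x - s ≤ infDist x (f ⁻¹' Ioi s)ᶜ := by
    refine (le_infDist hne).2 fun y hy => ?_
    have hys : f y ≤ s := not_lt.1 hy
    have hlip : f x ≤ f y + dist x y := by simpa using hf.le_add_mul x y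
    linarith
  linarith

lemma LipschitzWith.innerLayer_preimage_Ioi_subset {f : M → ℝ} (hf : LipschitzWith 1 f)
    {s : ℝ} (hne : (f ⁻¹' Ioi s)ᶜ.Nonempty) (κ : ℝ) :
    innerLayer (f ⁻¹' Ioi s) κ ⊆ f ⁻¹' Ioc s (s + κ) := fun x ⟨hxs, hxκ⟩ =>
  ⟨hxs, by linarith [hf.le_infDist_compl_preimage_Ioi_add hne x]⟩

lemma IsOpen.preimage_infDist_compl_Ioi_zero {A : Set M} (hA : IsOpen A) (hAc : Aᶜ.Nonempty) :
    (infDist · Aᶜ) ⁻¹' Ioi 0 = A := by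
  ext x
  simp only [mem_preimage, mem_Ioi, ← hA.isClosed_compl.notMem_iff_infDist_pos hAc,
    mem_compl_iff, not_not]

lemma IsOpen.innerLayer_eq_preimage_infDist_Ioc {A : Set M} (hA : IsOpen A) (hAc : Aᶜ.Nonempty)
    (t : ℝ) : innerLayer A t = (infDist · Aᶜ) ⁻¹' Ioc 0 t := by
  ext x
  simp only [innerLayer, mem_ofPred_eq, mem_preimage, mem_Ioc,
    ← hA.isClosed_compl.notMem_iff_infDist_pos hAc, mem_compl_iff, not_not]

section

variable [MeasurableSpace M] [OpensMeasurableSpace M] {μ : Measure M} {A : Set M} {c u : ℝ}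

lemma HasIsoperimetricConst.measure_superlevel_add_le (hc : HasIsoperimetricConst μ c u)
    (hA : IsOpen A) (hAb : Bornology.IsBounded A) (hAc : Aᶜ.Nonempty) (hμA : μ A ≠ ⊤)
    {s κ : ℝ} (hs : 0 ≤ s) (hκ : 0 < κ) (hκu : κ ≤ u) :
    (μ ((infDist · Aᶜ) ⁻¹' Ioi (s + κ))).toReal ≤
      (1 - c * κ) * (μ ((infDist · Aᶜ) ⁻¹' Ioi s)).toReal := by
  set f : M → ℝ := (infDist · Aᶜ)
  have hf : LipschitzWith 1 f := lipschitz_infDist_pt _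
  have hUA : ∀ r, 0 ≤ r → f ⁻¹' Ioi r ⊆ A := by
    rw [← hA.preimage_infDist_compl_Ioi_zero hAc]
    exact fun r hr => preimage_mono (Ioi_subset_Ioi hr)
  have hfin : ∀ r, 0 ≤ r → μ (f ⁻¹' Ioi r) ≠ ⊤ := fun r hr =>
    ne_top_of_le_ne_top hμA (measure_mono (hUA r hr))
  have hUc : (f ⁻¹' Ioi s)ᶜ.Nonempty := hAc.mono (compl_subset_compl.2 (hUA s hs))
  have hlayer : ENNReal.ofReal (c * κ) * μ (f ⁻¹' Ioi s) ≤ μ (f ⁻¹' Ioc s (s + κ)) :=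
    (hc _ (isOpen_lt continuous_const hf.continuous) (hAb.subset (hUA s hs)) κ hκ hκu).trans
      (measure_mono (hf.innerLayer_preimage_Ioi_subset hUc κ))
  have hsum : μ (f ⁻¹' Ioi (s + κ)) + ENNReal.ofReal (c * κ) * μ (f ⁻¹' Ioi s) ≤
      μ (f ⁻¹' Ioi s) := by
    calc _ ≤ μ (f ⁻¹' Ioi (s + κ)) + μ (f ⁻¹' Ioc s (s + κ)) :=
          add_le_add_right hlayer _
      _ = μ (f ⁻¹' Ioi s) :=
          (measure_preimage_Ioi_eq_add μ hf.continuous.measurable (by linarith)).symm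
  have := ENNReal.toReal_mono (hfin s hs) hsum
  rw [ENNReal.toReal_add (hfin _ (by positivity))
    (ENNReal.mul_ne_top ENNReal.ofReal_ne_top (hfin s hs)), ENNReal.toReal_mul,
    ENNReal.toReal_ofReal'] at this
  nlinarith [le_max_left (c * κ) 0, (μ (f ⁻¹' Ioi s)).toReal_nonneg]

lemma HasIsoperimetricConst.toReal_mul_le_toReal_measure_innerLayer
    (hc : HasIsoperimetricConst μ c u) (hu : 0 < u) (hA : IsOpen A)
    (hAb : Bornology.IsBounded A) (hAc : Aᶜ.Nonempty) (hμA : μ A ≠ ⊤) {t : ℝ}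
    (ht : 0 < t) :
    (1 - Real.exp (-(c * t))) * (μ A).toReal ≤ (μ (innerLayer A t)).toReal := by
  set f : M → ℝ := (infDist · Aᶜ)
  have hdecay :
      (μ (f ⁻¹' Ioi t)).toReal ≤ Real.exp (-(c * t)) * (μ (f ⁻¹' Ioi 0)).toReal :=
    le_exp_neg_mul_mul_of_step (g := fun s => (μ (f ⁻¹' Ioi s)).toReal) hu ht
      ENNReal.toReal_nonneg fun s κ hs hκ hκu =>
        hc.measure_superlevel_add_le hA hAb hAc hμA hs hκ hκu
  rw [hA.preimage_infDist_compl_Ioi_zero hAc] at hdecay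
  have hsplit : μ A = μ (f ⁻¹' Ioi t) + μ (innerLayer A t) := by
    rw [hA.innerLayer_eq_preimage_infDist_Ioc hAc]
    nth_rw 1 [← hA.preimage_infDist_compl_Ioi_zero hAc]
    exact measure_preimage_Ioi_eq_add μ (continuous_infDist_pt _).measurable ht.le
  have hfin_t : μ (f ⁻¹' Ioi t) ≠ ⊤ := ne_top_of_le_ne_top hμA (hsplit ▸ le_self_add)
  have hfin : μ (innerLayer A t) ≠ ⊤ :=
    ne_top_of_le_ne_top hμA (measure_mono fun x hx => hx.1)
  rw [hsplit, ENNReal.toReal_add hfin_t hfin] at hdecay ⊢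
  linarith

theorem HasIsoperimetricConst.ofReal_one_sub_exp_mul_measure_le
    (hc : HasIsoperimetricConst μ c u) (hu : 0 < u) (hA : IsOpen A)
    (hAb : Bornology.IsBounded A) {t : ℝ} (ht : 0 < t) :
    ENNReal.ofReal (1 - Real.exp (-(c * t))) * μ A ≤ μ (innerLayer A t) := by
  rcases le_or_gt c 0 with hc₀ | hc₀
  · have : 1 - Real.exp (-(c * t)) ≤ 0 := sub_nonpos.2 (Real.one_le_exp (by nlinarith))
    simp [ENNReal.ofReal_of_nonpos this]
  rcases Aᶜ.eq_empty_or_nonempty with hAc | hAc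
  · have hlayer : innerLayer A t = A := by simp [innerLayer, hAc, ht.le]
    rw [hlayer]
    exact mul_le_of_le_one_left zero_le
      (ENNReal.ofReal_le_one.2 (by linarith [Real.exp_pos (-(c * t))]))
  by_cases hμA : μ A = ⊤
  · set κ := min u t
    have hκ : 0 < κ := lt_min hu ht
    calc _ ≤ ⊤ := le_top
      _ = ENNReal.ofReal (c * κ) * μ A := by
        rw [hμA, ENNReal.mul_top (ENNReal.ofReal_pos.2 (mul_pos hc₀ hκ)).ne']
      _ ≤ μ (innerLayer A κ) := hc A hA hAb κ hκ (min_le_left u t)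
      _ ≤ μ (innerLayer A t) :=
          measure_mono fun x hx => ⟨hx.1, hx.2.trans (min_le_right u t)⟩
  calc _ = ENNReal.ofReal ((1 - Real.exp (-(c * t))) * (μ A).toReal) := by
        rw [ENNReal.ofReal_mul' ENNReal.toReal_nonneg, ENNReal.ofReal_toReal hμA]
    _ ≤ μ (innerLayer A t) := ENNReal.ofReal_le_of_le_toReal
        (hc.toReal_mul_le_toReal_measure_innerLayer hu hA hAb hAc hμA ht)

end

end

theorem measure_layer_ge_of_isoperimetric_general
    {M : Type*} [MetricSpace M] [MeasurableSpace M] [BorelSpace M]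
    (μ : Measure M)
    (κ₀ C : ℝ) (hκ₀ : 0 < κ₀)
    (hI : ∀ A : Set M, IsOpen A → Bornology.IsBounded A →
      ∀ κ : ℝ, 0 < κ → κ ≤ κ₀ →
        ENNReal.ofReal (C * κ) * μ A ≤ μ {x | x ∈ A ∧ Metric.infDist x Aᶜ ≤ κ}) :
    ∀ A : Set M, IsOpen A → Bornology.IsBounded A → ∀ t : ℝ, 0 < t →
      ENNReal.ofReal
          (1 - Real.exp (-(sSup {c : ℝ | ∃ u : ℝ, 0 < u ∧ u ≤ κ₀ ∧
              ∀ B : Set M, IsOpen B → Bornology.IsBounded B →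
                ∀ κ : ℝ, 0 < κ → κ ≤ u →
                  ENNReal.ofReal (c * κ) * μ B ≤
                    μ {x | x ∈ B ∧ Metric.infDist x Bᶜ ≤ κ}} * t))) * μ A
        ≤ μ {x | x ∈ A ∧ Metric.infDist x Aᶜ ≤ t} := by
  intro A hA hAb t ht
  refine ofReal_one_sub_exp_csSup_mul_le ?_ ht.le fun c ⟨u, hu, _, hc⟩ => ?_
  · exact ⟨C, κ₀, hκ₀, le_rfl, hI⟩
  · exact HasIsoperimetricConst.ofReal_one_sub_exp_mul_measure_le hc hu hA hAb ht

/-- Let `(M,ρ,μ)` satisfy property (I) with constants `κ₀, C`.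
Let `I_M = sup_{t ∈ (0,κ₀]} C_t` be the optimal isoperimetric constant, realized here
as the supremum of all constants `c` that work for all `κ ∈ (0,t]` for some `t ∈ (0,κ₀]`.
Then for every bounded open `A` and every `t > 0`,
`μ(A_t) ≥ (1 − e^{−I_M·t})·μ(A)`, where `A_t = {x ∈ A : dist(x,Aᶜ) ≤ t}`. -/
theorem measure_layer_ge_of_isoperimetric
    {M : Type*} [MetricSpace M] [MeasurableSpace M] [BorelSpace M]
    (μ : Measure M)
    (hpos : μ Set.univ ≠ 0)
    (hballs : ∀ (x : M) (r : ℝ), μ (Metric.ball x r) < ⊤)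
    (κ₀ C : ℝ) (hκ₀ : 0 < κ₀) (hC : 0 < C)
    (hI : ∀ A : Set M, IsOpen A → Bornology.IsBounded A →
      ∀ κ : ℝ, 0 < κ → κ ≤ κ₀ →
        ENNReal.ofReal (C * κ) * μ A ≤ μ {x | x ∈ A ∧ Metric.infDist x Aᶜ ≤ κ}) :
    ∀ A : Set M, IsOpen A → Bornology.IsBounded A → ∀ t : ℝ, 0 < t →
      ENNReal.ofReal
          (1 - Real.exp (-(sSup {c : ℝ | ∃ u : ℝ, 0 < u ∧ u ≤ κ₀ ∧
              ∀ B : Set M, IsOpen B → Bornology.IsBounded B →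
                ∀ κ : ℝ, 0 < κ → κ ≤ u →
                  ENNReal.ofReal (c * κ) * μ B ≤
                    μ {x | x ∈ B ∧ Metric.infDist x Bᶜ ≤ κ}} * t))) * μ A
        ≤ μ {x | x ∈ A ∧ Metric.infDist x Aᶜ ≤ t} :=
  measure_layer_ge_of_isoperimetric_general μ κ₀ C hκ₀ hI
end

section
/- Under the assumptions of property (I), for every bounded open set A and every s > 0, μ(A^s) ≤ e^{−I_M·s}·μ(A), where A^s = {x ∈ A : dist(x,Aᶜ) > s}. -/
open MeasureTheory Metric Set

private lemma le_infDist_aux {M : Type*} [MetricSpace M] {s : Set M} (hs : s.Nonempty)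
    {x : M} {b : ℝ} (h : ∀ y ∈ s, b ≤ dist x y) : b ≤ Metric.infDist x s := by
  by_contra hlt
  push_neg at hlt
  obtain ⟨y, hy, hd⟩ := (Metric.infDist_lt_iff hs).1 hlt
  exact absurd (h y hy) (not_le.2 hd)

private lemma iter_aux {M : Type*} [MetricSpace M] [MeasurableSpace M] [BorelSpace M]
    (μ : Measure M) (A : Set M) (hAo : IsOpen A) (hAb : Bornology.IsBounded A)
    (hAc : Aᶜ.Nonempty) (hAfin : μ A ≠ ⊤)
    (c u : ℝ) (hc : 0 < c) (hu : 0 < u)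
    (hS : ∀ B : Set M, IsOpen B → Bornology.IsBounded B →
      ∀ κ : ℝ, 0 < κ → κ ≤ u →
        ENNReal.ofReal (c * κ) * μ B ≤ μ {x | x ∈ B ∧ Metric.infDist x Bᶜ ≤ κ})
    (κ : ℝ) (hκ : 0 < κ) (hκu : κ ≤ u) :
    ∀ k : ℕ, μ {x | x ∈ A ∧ (k : ℝ) * κ < Metric.infDist x Aᶜ}
      ≤ ENNReal.ofReal (Real.exp (-(c * κ))) ^ k * μ A := by
  intro k
  induction k with
  | zero =>
    simp only [Nat.cast_zero, zero_mul, pow_zero, one_mul]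
    exact measure_mono (fun x hx => hx.1)
  | succ k ih =>
    set B : Set M := {x | x ∈ A ∧ (k : ℝ) * κ < Metric.infDist x Aᶜ} with hB
    have hBopen : IsOpen B :=
      hAo.inter (isOpen_lt continuous_const (Metric.continuous_infDist_pt Aᶜ))
    have hBsub : B ⊆ A := fun x hx => hx.1
    have hBb : Bornology.IsBounded B := hAb.subset hBsub
    have hBfin : μ B ≠ ⊤ := fun h => hAfin (top_le_iff.1 (h ▸ measure_mono hBsub))
    have hBc : Bᶜ.Nonempty := hAc.mono (compl_subset_compl.2 hBsub)
    -- key inclusion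
    have hsubset : {x | x ∈ A ∧ ((k + 1 : ℕ) : ℝ) * κ < Metric.infDist x Aᶜ}
        ⊆ B \ {x | x ∈ B ∧ Metric.infDist x Bᶜ ≤ κ} := by
      rintro x ⟨hxA, hxd⟩
      push_cast at hxd
      have hκ0 : 0 ≤ (k : ℝ) * κ := mul_nonneg (Nat.cast_nonneg k) hκ.le
      have hxB : x ∈ B := ⟨hxA, by nlinarith⟩
      have hinf : Metric.infDist x Aᶜ - (k : ℝ) * κ ≤ Metric.infDist x Bᶜ := by
        apply le_infDist_aux hBc
        intro y hy
        simp only [hB, mem_compl_iff, mem_setOf_eq, not_and, not_lt] at hy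
        by_cases hyA : y ∈ A
        · have := hy hyA
          have h2 := Metric.infDist_le_infDist_add_dist (x := x) (y := y) (s := Aᶜ)
          linarith
        · have := Metric.infDist_le_dist_of_mem (x := x) (s := Aᶜ) hyA
          linarith
      refine ⟨hxB, ?_⟩
      simp only [mem_setOf_eq, not_and, not_le]
      intro _
      linarith
    have hcol := hS B hBopen hBb κ hκ hκu
    have hcolmeas : MeasurableSet {x | x ∈ B ∧ Metric.infDist x Bᶜ ≤ κ} := by
      have : {x | x ∈ B ∧ Metric.infDist x Bᶜ ≤ κ}
          = B ∩ {x | Metric.infDist x Bᶜ ≤ κ} := rfl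
      rw [this]
      exact hBopen.measurableSet.inter
        ((isClosed_le (Metric.continuous_infDist_pt Bᶜ) continuous_const).measurableSet)
    set T' : Set M := {x | x ∈ A ∧ ((k + 1 : ℕ) : ℝ) * κ < Metric.infDist x Aᶜ}
    have hTdisj : Disjoint T' {x | x ∈ B ∧ Metric.infDist x Bᶜ ≤ κ} :=
      Set.disjoint_of_subset_left hsubset disjoint_sdiff_left
    have h1 : μ T' + μ {x | x ∈ B ∧ Metric.infDist x Bᶜ ≤ κ} ≤ μ B := by
      rw [← measure_union hTdisj hcolmeas]
      apply measure_mono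
      rintro x (hx | hx)
      · exact (hsubset hx).1
      · exact hx.1
    have h2 : μ T' + ENNReal.ofReal (c * κ) * μ B ≤ μ B :=
      le_trans (add_le_add le_rfl hcol) h1
    have h3 : μ T' ≤ μ B - ENNReal.ofReal (c * κ) * μ B := ENNReal.le_sub_of_add_le_right (by simp [ENNReal.mul_ne_top, hBfin, ENNReal.ofReal_ne_top]) h2
    have h4 : μ B - ENNReal.ofReal (c * κ) * μ B
        ≤ ENNReal.ofReal (Real.exp (-(c * κ))) * μ B := by
      have hmul : μ B - ENNReal.ofReal (c * κ) * μ B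
          = (1 - ENNReal.ofReal (c * κ)) * μ B := by
        rw [ENNReal.sub_mul (fun _ _ => hBfin), one_mul]
      rw [hmul]
      apply mul_le_mul_left
      rw [tsub_le_iff_right, ← ENNReal.ofReal_add (Real.exp_pos _).le
        (mul_nonneg hc.le hκ.le), ← ENNReal.ofReal_one]
      apply ENNReal.ofReal_le_ofReal
      have := Real.add_one_le_exp (-(c * κ))
      linarith
    calc μ T' ≤ ENNReal.ofReal (Real.exp (-(c * κ))) * μ B := h3.trans h4
      _ ≤ ENNReal.ofReal (Real.exp (-(c * κ)))
          * (ENNReal.ofReal (Real.exp (-(c * κ))) ^ k * μ A) := mul_le_mul_right ih _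
      _ = ENNReal.ofReal (Real.exp (-(c * κ))) ^ (k + 1) * μ A := by
        rw [← mul_assoc, ← pow_succ']

private lemma step_aux {M : Type*} [MetricSpace M] [MeasurableSpace M] [BorelSpace M]
    (μ : Measure M) (A : Set M) (hAo : IsOpen A) (hAb : Bornology.IsBounded A)
    (hAc : Aᶜ.Nonempty) (hAfin : μ A ≠ ⊤)
    (c u : ℝ) (hc : 0 < c) (hu : 0 < u)
    (hS : ∀ B : Set M, IsOpen B → Bornology.IsBounded B →
      ∀ κ : ℝ, 0 < κ → κ ≤ u →
        ENNReal.ofReal (c * κ) * μ B ≤ μ {x | x ∈ B ∧ Metric.infDist x Bᶜ ≤ κ})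
    (s : ℝ) (hs : 0 < s) :
    μ {x | x ∈ A ∧ s < Metric.infDist x Aᶜ}
      ≤ ENNReal.ofReal (Real.exp (-(c * s))) * μ A := by
  obtain ⟨n, hn⟩ := exists_nat_ge (s / u)
  set m : ℕ := max n 1 with hm
  have hm1 : 1 ≤ m := le_max_right n 1
  have hmpos : (0 : ℝ) < m := by exact_mod_cast hm1
  set κ : ℝ := s / m with hκdef
  have hκpos : 0 < κ := div_pos hs hmpos
  have hκu : κ ≤ u := by
    rw [div_le_iff₀ hmpos]
    have h1 : s / u ≤ (m : ℝ) := hn.trans (by exact_mod_cast le_max_left n 1)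
    calc s = (s / u) * u := (div_mul_cancel₀ s hu.ne').symm
      _ ≤ (m : ℝ) * u := by nlinarith
      _ = u * m := by ring
  have hm0 : (m : ℝ) ≠ 0 := hmpos.ne'
  have hsm : (m : ℝ) * κ = s := by rw [hκdef]; field_simp
  have := iter_aux μ A hAo hAb hAc hAfin c u hc hu hS κ hκpos hκu m
  rw [hsm] at this
  refine this.trans (le_of_eq ?_)
  congr 1
  rw [← ENNReal.ofReal_pow (Real.exp_pos _).le, ← Real.exp_nat_mul]
  congr 1
  rw [← hsm]
  ring

/-- Under property (I), with `I_M` the optimal isoperimetric constant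
(the supremum of all constants `c` valid for all `κ ∈ (0,u]` for some `u ∈ (0,κ₀]`),
for every bounded open set `A` and every `s > 0`,
`μ(A^s) ≤ e^{−I_M·s}·μ(A)`, where `A^s = {x ∈ A : dist(x,Aᶜ) > s}`. -/
theorem measure_inner_part_le_of_isoperimetric
    {M : Type*} [MetricSpace M] [MeasurableSpace M] [BorelSpace M]
    (μ : Measure M)
    (hpos : μ Set.univ ≠ 0)
    (hballs : ∀ (x : M) (r : ℝ), μ (Metric.ball x r) < ⊤)
    (κ₀ C : ℝ) (hκ₀ : 0 < κ₀) (hC : 0 < C)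
    (hI : ∀ A : Set M, IsOpen A → Bornology.IsBounded A →
      ∀ κ : ℝ, 0 < κ → κ ≤ κ₀ →
        ENNReal.ofReal (C * κ) * μ A ≤ μ {x | x ∈ A ∧ Metric.infDist x Aᶜ ≤ κ}) :
    ∀ A : Set M, IsOpen A → Bornology.IsBounded A → ∀ s : ℝ, 0 < s →
      μ {x | x ∈ A ∧ s < Metric.infDist x Aᶜ}
        ≤ ENNReal.ofReal
            (Real.exp (-(sSup {c : ℝ | ∃ u : ℝ, 0 < u ∧ u ≤ κ₀ ∧
                ∀ B : Set M, IsOpen B → Bornology.IsBounded B →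
                  ∀ κ : ℝ, 0 < κ → κ ≤ u →
                    ENNReal.ofReal (c * κ) * μ B ≤
                      μ {x | x ∈ B ∧ Metric.infDist x Bᶜ ≤ κ}} * s))) * μ A := by
  intro A hAo hAb s hs
  set S : Set ℝ := {c : ℝ | ∃ u : ℝ, 0 < u ∧ u ≤ κ₀ ∧
    ∀ B : Set M, IsOpen B → Bornology.IsBounded B →
      ∀ κ : ℝ, 0 < κ → κ ≤ u →
        ENNReal.ofReal (c * κ) * μ B ≤ μ {x | x ∈ B ∧ Metric.infDist x Bᶜ ≤ κ}} with hSdef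
  rcases Set.eq_empty_or_nonempty Aᶜ with hAc | hAc
  · have : {x | x ∈ A ∧ s < Metric.infDist x Aᶜ} = ∅ := by
      ext x
      simp only [hAc, Metric.infDist_empty, mem_setOf_eq, mem_empty_iff_false, iff_false,
        not_and, not_lt]
      exact fun _ => hs.le
    rw [this]
    simp
  · -- μ A is finite
    obtain ⟨x₀, -⟩ := id hAc
    obtain ⟨r, hr⟩ := hAb.subset_closedBall x₀
    have hAfin : μ A ≠ ⊤ := by
      refine ne_top_of_le_ne_top (hballs x₀ (r + 1)).ne (measure_mono ?_)
      exact hr.trans (Metric.closedBall_subset_ball (lt_add_one r))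
    by_cases hbdd : BddAbove S
    · have hCS : C ∈ S := ⟨κ₀, hκ₀, le_refl κ₀, hI⟩
      have hIpos : 0 < sSup S := lt_of_lt_of_le hC (le_csSup hbdd hCS)
      refine ge_of_tendsto (f := fun c => ENNReal.ofReal (Real.exp (-(c * s))) * μ A)
        (x := nhdsWithin (sSup S) (Set.Iio (sSup S))) ?_ ?_
      · have hcont : ContinuousAt (fun c => ENNReal.ofReal (Real.exp (-(c * s)))) (sSup S) := by
          apply ENNReal.continuous_ofReal.continuousAt.comp
          exact (Real.continuous_exp.comp ((continuous_id.mul continuous_const).neg)).continuousAt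
        exact ENNReal.Tendsto.mul_const (hcont.tendsto.mono_left nhdsWithin_le_nhds)
          (Or.inr hAfin)
      · filter_upwards [Ioo_mem_nhdsLT_of_mem (⟨hIpos, le_refl _⟩ : sSup S ∈ Set.Ioc 0 (sSup S))]
          with c hc
        obtain ⟨c', hc'S, hcc'⟩ := exists_lt_of_lt_csSup ⟨C, hCS⟩ hc.2
        obtain ⟨u, hu, huκ, hprop⟩ := hc'S
        have hc'pos : 0 < c' := hc.1.trans hcc'
        have key := step_aux μ A hAo hAb hAc hAfin c' u hc'pos hu hprop s hs
        refine key.trans (mul_le_mul_left ?_ _)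
        apply ENNReal.ofReal_le_ofReal
        apply Real.exp_le_exp.2
        nlinarith
    · rw [Real.sSup_of_not_bddAbove hbdd]
      simp only [zero_mul, neg_zero, Real.exp_zero, ENNReal.ofReal_one, one_mul]
      exact measure_mono (fun x hx => hx.1)
end

section
/- Let (M,ρ,μ) be a metric measure space with the approximate midpoint property with constants R₀ ≥ 0 and β ∈ (1/2,1), locally doubling, and let r ∈ (1,∞], R₀/(1−β) < c < b. Then a function f ∈ L¹(μ) belongs to the atomic Hardy space H_c^{1,r}(μ) if and only if it belongs to H_b^{1,r}(μ), and there is a constant C (depending only on M, b, c) with ‖f‖_{H_b^{1,r}} ≤ ‖f‖_{H_c^{1,r}} ≤ C·‖f‖_{H_b^{1,r}}. -/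
open MeasureTheory Metric Set ENNReal

variable {M : Type*} [MetricSpace M] [MeasurableSpace M]

/-- A `(1,r)`-atom at scale `b`: a function supported in a ball `B` of radius at most
`b`, with vanishing integral and `‖a‖_{L^r} ≤ μ(B)^{1/r}·μ(B)⁻¹` (for `r = ∞` this is
`‖a‖_∞ ≤ μ(B)⁻¹`). -/

def IsAtomOn (μ : MeasureTheory.Measure M) (r : ℝ≥0∞) (b : ℝ) (a : M → ℝ) : Prop :=
  ∃ (x : M) (s : ℝ), 0 < s ∧ s ≤ b ∧
    (∀ y, y ∉ Metric.ball x s → a y = 0) ∧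
    MeasureTheory.Integrable a μ ∧
    (∫ y, a y ∂μ) = 0 ∧
    MeasureTheory.eLpNorm a r μ ≤
      μ (Metric.ball x s) ^ ((1 / r).toReal) * (μ (Metric.ball x s))⁻¹

/-- Membership in the atomic Hardy space `H_b^{1,r}(μ)`: `f = Σ λ_k a_k` with `(1,r)`-atoms
`a_k` supported in balls of radius ≤ `b`, `Σ|λ_k| < ∞`, the series converging in `L¹(μ)`. -/

def InHardy (μ : MeasureTheory.Measure M) (r : ℝ≥0∞) (b : ℝ) (f : M → ℝ) : Prop :=
  ∃ (c : ℕ → ℝ) (a : ℕ → M → ℝ),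
    (∀ n, IsAtomOn μ r b (a n)) ∧ Summable (fun n => |c n|) ∧
    Filter.Tendsto
      (fun N => ∫ x, |f x - ∑ n ∈ Finset.range N, c n * a n x| ∂μ)
      Filter.atTop (nhds 0)

/-- The atomic Hardy norm `‖f‖_{H_b^{1,r}(μ)}`: the infimum of `Σ|λ_k|` over all atomic
decompositions of `f`. -/

noncomputable def hardyNorm (μ : MeasureTheory.Measure M) (r : ℝ≥0∞) (b : ℝ)
    (f : M → ℝ) : ℝ :=
  sInf {t : ℝ | ∃ (c : ℕ → ℝ) (a : ℕ → M → ℝ),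
    (∀ n, IsAtomOn μ r b (a n)) ∧ Summable (fun n => |c n|) ∧
    Filter.Tendsto
      (fun N => ∫ x, |f x - ∑ n ∈ Finset.range N, c n * a n x| ∂μ)
      Filter.atTop (nhds 0) ∧
    (∑' n, |c n|) = t}

/-! A `(1,r)`-atom at scale `b` is an atomic sum at scale `c` with at most `N` terms and
coefficient sum at most `K`, for constants depending only on `μ, b, c`. Cover its ball `B(x₀,s)`
by at most `⌊C⌋₊` balls `B(yᵢ,δ)` (a maximal separated set, counted by doubling), partition `B`
accordingly into pieces `Eᵢ`, put `mᵢ = ∫_{Eᵢ} a` and let `φ_y` be the normalised indicator of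
`B(y,δ)`. Since `∑ mᵢ = 0`,
  `a = ∑ (1_{Eᵢ} a - mᵢ φ_{yᵢ}) + ∑ mᵢ (φ_{yᵢ} - φ_{x₀})`.
By doubling each `1_{Eᵢ} a - mᵢ φ_{yᵢ}` is a bounded multiple of a `c`-atom on `B(yᵢ,c)`; and
`φ_x - φ_y` is a `c`-atom up to a constant once `d(x,y) ≤ τ` with `τ + δ = c`, which is compatible
with `τ ≥ R₀` because `c > R₀`. The approximate midpoint property splits `φ_{yᵢ} - φ_{x₀}` into
`2ᵏ` such differences. Replacing every atom of an `H_b` decomposition by its atomic sum and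
flattening the double series gives an `H_c` decomposition of the same function with at most `K`
times the coefficient sum; the other inequality holds because `c`-atoms are `b`-atoms. -/

open Filter Topology NNReal

def LocallyDoubling (μ : Measure M) : Prop :=
  ∀ b : ℝ, 0 < b → ∃ D : ℝ, ∀ (x : M) (s : ℝ), 0 < s → s ≤ b →
    μ (ball x (2 * s)) ≤ ENNReal.ofReal D * μ (ball x s)

def HasApproxMidpoints (X : Type*) [PseudoMetricSpace X] (R₀ β : ℝ) : Prop :=
  ∀ x y : X, R₀ < dist x y → ∃ (z : X) (s : ℝ), s < β * dist x y ∧ x ∈ ball z s ∧ y ∈ ball z s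

section Doubling

variable {μ : Measure M}

theorem measure_ball_two_pow_mul_le {D T : ℝ}
    (hD : ∀ (x : M) (s : ℝ), 0 < s → s ≤ T →
      μ (ball x (2 * s)) ≤ ENNReal.ofReal D * μ (ball x s))
    (x : M) {s : ℝ} (hs : 0 < s) :
    ∀ n : ℕ, 2 ^ n * s ≤ T → μ (ball x (2 ^ n * s)) ≤ ENNReal.ofReal D ^ n * μ (ball x s)
  | 0, _ => by simp
  | n + 1, hT => by
    have hn : 2 ^ n * s ≤ T := le_trans (by gcongr <;> norm_num) hT
    calc μ (ball x (2 ^ (n + 1) * s)) = μ (ball x (2 * (2 ^ n * s))) := by ring_nf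
      _ ≤ ENNReal.ofReal D * μ (ball x (2 ^ n * s)) := hD x _ (by positivity) hn
      _ ≤ ENNReal.ofReal D * (ENNReal.ofReal D ^ n * μ (ball x s)) := by
        gcongr; exact measure_ball_two_pow_mul_le hD x hs n hn
      _ = ENNReal.ofReal D ^ (n + 1) * μ (ball x s) := by ring

def ComparableBalls (μ : Measure M) (ε R : ℝ) (C : ℝ≥0) : Prop :=
  ∀ (p q : M) (s s' : ℝ), ε ≤ s → s ≤ R → dist p q + s' ≤ R →
    μ (ball p s') ≤ C * μ (ball q s)

theorem ComparableBalls.mono {μ : Measure M} {ε ε' R R' : ℝ} {C : ℝ≥0}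
    (hC : ComparableBalls μ ε R C) (hε : ε ≤ ε') (hR : R' ≤ R) : ComparableBalls μ ε' R' C :=
  fun p q s s' hs hsR hd => hC p q s s' (hε.trans hs) (hsR.trans hR) (hd.trans hR)

theorem exists_comparableBalls (hLD : LocallyDoubling μ) {ε : ℝ} (hε : 0 < ε) (R : ℝ) :
    ∃ C : ℝ≥0, 1 ≤ C ∧ ComparableBalls μ ε R C := by
  obtain ⟨n, hn⟩ := pow_unbounded_of_one_lt (R / ε) one_lt_two
  obtain ⟨D, hD⟩ := hLD (2 ^ n * max R ε) (by positivity)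
  refine ⟨(max D 1).toNNReal ^ n, one_le_pow₀ (by simp), fun p q s s' hεs hsR hR => ?_⟩
  have hs : 0 < s := hε.trans_le hεs
  have hRs : s' + dist p q ≤ 2 ^ n * s := by
    rw [div_lt_iff₀ hε] at hn
    nlinarith [pow_pos (two_pos (α := ℝ)) n]
  calc μ (ball p s') ≤ μ (ball q (2 ^ n * s)) :=
        measure_mono ((ball_subset_ball' le_rfl).trans (ball_subset_ball hRs))
    _ ≤ ENNReal.ofReal D ^ n * μ (ball q s) :=
        measure_ball_two_pow_mul_le hD q hs n (by gcongr; exact le_max_of_le_left hsR)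
    _ ≤ ((max D 1).toNNReal ^ n : ℝ≥0) * μ (ball q s) := by
        push_cast
        gcongr
        exact ENNReal.ofReal_le_ofReal (le_max_left D 1)

theorem isOpenPosMeasure_of_locallyDoubling (hpos : μ univ ≠ 0) (hLD : LocallyDoubling μ) :
    μ.IsOpenPosMeasure := by
  refine ⟨fun U hU ⟨x, hx⟩ hU0 => hpos ?_⟩
  obtain ⟨s, hs, hsU⟩ := Metric.isOpen_iff.1 hU x hx
  have hball : ∀ n : ℕ, μ (ball x n) = 0 := fun n => by
    obtain ⟨C, -, hC⟩ := exists_comparableBalls hLD hs (n + s)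
    refine measure_mono_null (ball_subset_ball (le_add_of_nonneg_right hs.le)) ?_
    refine le_antisymm ?_ bot_le
    calc μ (ball x (n + s)) ≤ C * μ (ball x s) :=
          hC x x s _ le_rfl (le_add_of_nonneg_left n.cast_nonneg) (by simp)
      _ = 0 := by rw [measure_mono_null hsU hU0, mul_zero]
  rw [← iUnion_ball_nat x]
  exact measure_iUnion_null hball

end Doubling

noncomputable def atomBound {X : Type*} [MeasurableSpace X] (μ : Measure X) (r : ℝ≥0∞)
    (B : Set X) : ℝ≥0∞ :=
  μ B ^ (1 / r).toReal * (μ B)⁻¹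

theorem atomBound_le_sq_mul {X : Type*} [MeasurableSpace X] {μ : Measure X} {r : ℝ≥0∞}
    (hr : 1 ≤ r) {A B : Set X} {C : ℝ≥0∞} (hC : 1 ≤ C) (hA0 : μ A ≠ 0) (hAt : μ A ≠ ⊤)
    (hB0 : μ B ≠ 0) (hBt : μ B ≠ ⊤)
    (hAB : μ A ≤ C * μ B) (hBA : μ B ≤ C * μ A) :
    atomBound μ r A ≤ C ^ 2 * atomBound μ r B := by
  have hα1 : (1 / r).toReal ≤ 1 :=
    ENNReal.toReal_le_of_le_ofReal zero_le_one (by simpa [ENNReal.inv_le_one] using hr)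
  have hpow : μ A ^ (1 / r).toReal ≤ C * μ B ^ (1 / r).toReal := calc
    μ A ^ (1 / r).toReal ≤ (C * μ B) ^ (1 / r).toReal := by gcongr
    _ = C ^ (1 / r).toReal * μ B ^ (1 / r).toReal := ENNReal.mul_rpow_of_nonneg _ _ (by positivity)
    _ ≤ C * μ B ^ (1 / r).toReal := by
        gcongr
        simpa using ENNReal.rpow_le_rpow_of_exponent_le hC hα1
  have hinv : (μ A)⁻¹ ≤ C * (μ B)⁻¹ := calc
    (μ A)⁻¹ = (μ A)⁻¹ * μ B * (μ B)⁻¹ := by rw [mul_assoc, ENNReal.mul_inv_cancel hB0 hBt, mul_one]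
    _ ≤ (μ A)⁻¹ * (C * μ A) * (μ B)⁻¹ := by gcongr
    _ = C * (μ B)⁻¹ := by
        rw [mul_left_comm, ENNReal.inv_mul_cancel hA0 hAt, mul_one]
  calc atomBound μ r A ≤ (C * μ B ^ (1 / r).toReal) * (C * (μ B)⁻¹) := mul_le_mul' hpow hinv
    _ = C ^ 2 * atomBound μ r B := by rw [atomBound]; ring

theorem ofReal_two_mul_sq (C : ℝ≥0) : ENNReal.ofReal (2 * C ^ 2) = 2 * (C : ℝ≥0∞) ^ 2 := by
  rw [ENNReal.ofReal_mul zero_le_two, ENNReal.ofReal_pow C.coe_nonneg, ENNReal.ofReal_coe_nnreal]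
  simp

section Atoms

variable {μ : Measure M} {r : ℝ≥0∞} {b c : ℝ} {a : M → ℝ}

theorem IsAtomOn.mono (ha : IsAtomOn μ r c a) (hcb : c ≤ b) : IsAtomOn μ r b a := by
  obtain ⟨x, s, hs, hsc, h⟩ := ha
  exact ⟨x, s, hs, hsc.trans hcb, h⟩

theorem IsAtomOn.integrable (ha : IsAtomOn μ r c a) : Integrable a μ := by
  obtain ⟨-, -, -, -, -, h, -⟩ := ha
  exact h

theorem isAtomOn_zero (x : M) (hc : 0 < c) : IsAtomOn μ r c 0 :=
  ⟨x, c, hc, le_rfl, fun _ _ => rfl, integrable_zero _ _ _, integral_zero _ _, by simp⟩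

theorem IsAtomOn.integral_abs_le_one [μ.IsOpenPosMeasure]
    (hμ : ∀ (x : M) (s : ℝ), μ (ball x s) < ⊤) (hr : 1 ≤ r) (ha : IsAtomOn μ r c a) :
    ∫ y, |a y| ∂μ ≤ 1 := by
  obtain ⟨x, s, hs, -, hsupp, hint, -, hnorm⟩ := ha
  have hB0 : μ (ball x s) ≠ 0 := (measure_ball_pos μ x hs).ne'
  have hBt : μ (ball x s) ≠ ⊤ := (hμ x s).ne
  have hsupp' : Function.support a ⊆ ball x s := fun y hy => by_contra fun h => hy (hsupp y h)
  have hL1 : eLpNorm a 1 μ ≤ 1 := calc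
    eLpNorm a 1 μ = eLpNorm a 1 (μ.restrict (ball x s)) :=
        (eLpNorm_restrict_eq_of_support_subset hsupp').symm
    _ ≤ eLpNorm a r (μ.restrict (ball x s)) *
          μ.restrict (ball x s) univ ^ (1 / (1 : ℝ≥0∞).toReal - 1 / r.toReal) :=
        eLpNorm_le_eLpNorm_mul_rpow_measure_univ hr hint.aestronglyMeasurable.restrict
    _ ≤ μ (ball x s) ^ (1 / r).toReal * (μ (ball x s))⁻¹ *
          μ (ball x s) ^ (1 - (1 / r).toReal) := by
        have hexp : 1 / (1 : ℝ≥0∞).toReal - 1 / r.toReal = 1 - (1 / r).toReal := by simp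
        rw [Measure.restrict_apply_univ, hexp]
        gcongr
        exact (eLpNorm_mono_measure _ Measure.restrict_le_self).trans hnorm
    _ = 1 := by
        rw [mul_right_comm, ← ENNReal.rpow_add _ _ hB0 hBt, add_sub_cancel, ENNReal.rpow_one,
          ENNReal.mul_inv_cancel hB0 hBt]
  simp_rw [← Real.norm_eq_abs]
  rw [integral_norm_eq_lintegral_enorm hint.aestronglyMeasurable, ← eLpNorm_one_eq_lintegral_enorm]
  exact ENNReal.toReal_le_of_le_ofReal zero_le_one (by simpa using hL1)

theorem isAtomOn_inv_smul_of_eLpNorm_le {h : M → ℝ} {K : ℝ} (hK : 0 < K) {x : M} {s : ℝ}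
    (hs : 0 < s) (hsc : s ≤ c) (hsupp : ∀ y, y ∉ ball x s → h y = 0) (hint : Integrable h μ)
    (hmean : ∫ y, h y ∂μ = 0)
    (hnorm : eLpNorm h r μ ≤ ENNReal.ofReal K * atomBound μ r (ball x s)) :
    IsAtomOn μ r c (K⁻¹ • h) := by
  refine ⟨x, s, hs, hsc, fun y hy => by simp [hsupp y hy], hint.smul _,
    by simp only [Pi.smul_apply, integral_smul, hmean, smul_zero], ?_⟩
  have hK' : ‖K⁻¹‖ₑ = (ENNReal.ofReal K)⁻¹ := by
    rw [← ofReal_norm, Real.norm_of_nonneg (inv_nonneg.2 hK.le), ENNReal.ofReal_inv_of_pos hK]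
  calc eLpNorm (K⁻¹ • h) r μ
      ≤ (ENNReal.ofReal K)⁻¹ * (ENNReal.ofReal K * atomBound μ r (ball x s)) := by
        rw [eLpNorm_const_smul, hK']
        gcongr
    _ = atomBound μ r (ball x s) :=
        ENNReal.inv_mul_cancel_left (by simpa using hK) ENNReal.ofReal_ne_top

end Atoms

def IsAtomicSum (μ : Measure M) (r : ℝ≥0∞) (c K : ℝ) (N : ℕ) (h : M → ℝ) : Prop :=
  ∃ L : List (ℝ × (M → ℝ)), L.length ≤ N ∧ (∀ p ∈ L, IsAtomOn μ r c p.2) ∧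
    (L.map fun p => |p.1|).sum ≤ K ∧ h = (L.map fun p => p.1 • p.2).sum

section AtomicSum

variable {μ : Measure M} {r : ℝ≥0∞} {c K K' : ℝ} {N N' : ℕ} {a h g : M → ℝ}

namespace IsAtomicSum

theorem zero : IsAtomicSum μ r c 0 0 0 := ⟨[], le_rfl, by simp, by simp, by simp⟩

theorem nonneg (hh : IsAtomicSum μ r c K N h) : 0 ≤ K := by
  obtain ⟨L, -, -, hK, -⟩ := hh
  refine (List.sum_nonneg fun x hx => ?_).trans hK
  obtain ⟨p, -, rfl⟩ := List.mem_map.1 hx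
  exact abs_nonneg _

theorem mono (hh : IsAtomicSum μ r c K N h) (hK : K ≤ K') (hN : N ≤ N') :
    IsAtomicSum μ r c K' N' h := by
  obtain ⟨L, hlen, hA, hsum, hL⟩ := hh
  exact ⟨L, hlen.trans hN, hA, hsum.trans hK, hL⟩

theorem add (hh : IsAtomicSum μ r c K N h) (hg : IsAtomicSum μ r c K' N' g) :
    IsAtomicSum μ r c (K + K') (N + N') (h + g) := by
  obtain ⟨L, hlen, hA, hsum, rfl⟩ := hh
  obtain ⟨L', hlen', hA', hsum', rfl⟩ := hg
  refine ⟨L ++ L', by simp; omega, fun p hp => ?_, by simpa using add_le_add hsum hsum',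
    by simp⟩
  rcases List.mem_append.1 hp with hp | hp
  exacts [hA p hp, hA' p hp]

theorem smul (hh : IsAtomicSum μ r c K N h) (t : ℝ) :
    IsAtomicSum μ r c (|t| * K) N (t • h) := by
  obtain ⟨L, hlen, hA, hsum, rfl⟩ := hh
  refine ⟨L.map fun p => (t * p.1, p.2), by simpa using hlen, fun p hp => ?_, ?_, ?_⟩
  · obtain ⟨q, hq, rfl⟩ := List.mem_map.1 hp
    exact hA q hq
  · simpa [Function.comp_def, abs_mul, List.sum_map_mul_left] using
      mul_le_mul_of_nonneg_left hsum (abs_nonneg t)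
  · simp [List.smul_sum, Function.comp_def, mul_smul]

theorem sum {ι : Type*} (s : Finset ι) {K : ι → ℝ} {N : ι → ℕ} {h : ι → M → ℝ}
    (hh : ∀ i ∈ s, IsAtomicSum μ r c (K i) (N i) (h i)) :
    IsAtomicSum μ r c (∑ i ∈ s, K i) (∑ i ∈ s, N i) (∑ i ∈ s, h i) := by
  classical
  induction s using Finset.induction_on with
  | empty => simpa using zero
  | insert i s hi ih =>
    simp only [Finset.sum_insert hi]
    exact (hh i (Finset.mem_insert_self i s)).add
      (ih fun j hj => hh j (Finset.mem_insert_of_mem hj))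

theorem exists_list_length_eq (hh : IsAtomicSum μ r c K N h) (x₀ : M) (hc : 0 < c) :
    ∃ L : List (ℝ × (M → ℝ)), L.length = N ∧ (∀ p ∈ L, IsAtomOn μ r c p.2) ∧
      (L.map fun p => |p.1|).sum ≤ K ∧ h = (L.map fun p => p.1 • p.2).sum := by
  obtain ⟨L, hlen, hA, hsum, rfl⟩ := hh
  refine ⟨L ++ List.replicate (N - L.length) (0, 0), by simp; omega, fun p hp => ?_,
    by simpa using hsum, by simp⟩
  rcases List.mem_append.1 hp with hp | hp
  · exact hA p hp
  · rw [List.eq_of_mem_replicate hp]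
    exact isAtomOn_zero x₀ hc

theorem exists_fin (hh : IsAtomicSum μ r c K N h) (x₀ : M) (hc : 0 < c) :
    ∃ (lam : Fin N → ℝ) (A : Fin N → M → ℝ), (∀ j, IsAtomOn μ r c (A j)) ∧
      ∑ j, |lam j| ≤ K ∧ h = ∑ j, lam j • A j := by
  obtain ⟨L, rfl, hA, hsum, rfl⟩ := hh.exists_list_length_eq x₀ hc
  exact ⟨fun j => L[j].1, fun j => L[j].2, fun j => hA _ (List.getElem_mem _),
    (Fin.sum_univ_fun_getElem L fun p => |p.1|).trans_le hsum,
    (Fin.sum_univ_fun_getElem L fun p => p.1 • p.2).symm⟩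

end IsAtomicSum

theorem IsAtomOn.isAtomicSum_smul (ha : IsAtomOn μ r c a) (t : ℝ) :
    IsAtomicSum μ r c |t| 1 (t • a) :=
  ⟨[(t, a)], le_rfl, by simpa using ha, by simp, by simp⟩

theorem IsAtomOn.isAtomicSum (ha : IsAtomOn μ r c a) : IsAtomicSum μ r c 1 1 a := by
  simpa using ha.isAtomicSum_smul 1

theorem isAtomicSum_of_eLpNorm_le (hK : 0 < K) {x : M} {s : ℝ} (hs : 0 < s) (hsc : s ≤ c)
    (hsupp : ∀ y, y ∉ ball x s → h y = 0) (hint : Integrable h μ) (hmean : ∫ y, h y ∂μ = 0)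
    (hnorm : eLpNorm h r μ ≤ ENNReal.ofReal K * atomBound μ r (ball x s)) :
    IsAtomicSum μ r c K 1 h := by
  simpa [abs_of_pos hK, smul_inv_smul₀ hK.ne'] using
    (isAtomOn_inv_smul_of_eLpNorm_le hK hs hsc hsupp hint hmean hnorm).isAtomicSum_smul K

end AtomicSum

section Series

theorem Nat.divModEquiv_mul_add {N : ℕ} [NeZero N] (q : ℕ) (j : Fin N) :
    Nat.divModEquiv N (q * N + j) = (q, j) :=
  (Nat.divModEquiv N).apply_symm_apply (q, j)

theorem Nat.sum_range_mul_divModEquiv {β : Type*} [AddCommMonoid β] {N : ℕ} [NeZero N]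
    (g : ℕ × Fin N → β) (q : ℕ) :
    ∑ k ∈ Finset.range (q * N), g (Nat.divModEquiv N k) = ∑ n ∈ Finset.range q, ∑ j, g (n, j) := by
  induction q with
  | zero => simp
  | succ q ih =>
    rw [Nat.succ_mul, Finset.sum_range_add, ih, Finset.sum_range_succ,
      ← Fin.sum_univ_eq_sum_range (fun x => g (Nat.divModEquiv N (q * N + x)))]
    simp only [Nat.divModEquiv_mul_add]

theorem summable_abs_mul_and_tsum_le {N : ℕ} {cs : ℕ → ℝ} {lam : ℕ → Fin N → ℝ} {K : ℝ}
    (hcs : Summable fun n => |cs n|) (hlam : ∀ n, ∑ j, |lam n j| ≤ K) :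
    Summable (fun p : ℕ × Fin N => |cs p.1 * lam p.1 p.2|) ∧
      ∑' p : ℕ × Fin N, |cs p.1 * lam p.1 p.2| ≤ K * ∑' n, |cs n| := by
  have hfiber : ∀ n, ∑' j, |cs n * lam n j| ≤ K * |cs n| := fun n => by
    rw [tsum_fintype]
    simp_rw [abs_mul, ← Finset.mul_sum]
    rw [mul_comm]
    exact mul_le_mul_of_nonneg_right (hlam n) (abs_nonneg _)
  have hsum : Summable fun n => ∑' j, |cs n * lam n j| :=
    (hcs.mul_left K).of_nonneg_of_le (fun n => tsum_nonneg fun _ => abs_nonneg _) hfiber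
  have hprod : Summable (fun p : ℕ × Fin N => |cs p.1 * lam p.1 p.2|) :=
    (summable_prod_of_nonneg fun _ => abs_nonneg _).2 ⟨fun _ => .of_finite, hsum⟩
  refine ⟨hprod, ?_⟩
  rw [hprod.tsum_prod, ← _root_.tsum_mul_left]
  exact hsum.tsum_le_tsum hfiber (hcs.mul_left K)

theorem integral_abs_sum_le {α ι : Type*} [MeasurableSpace α] {ν : Measure α} (s : Finset ι)
    {g : ι → α → ℝ} (hg : ∀ i ∈ s, Integrable (g i) ν) :
    ∫ x, |∑ i ∈ s, g i x| ∂ν ≤ ∑ i ∈ s, ∫ x, |g i x| ∂ν := by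
  rw [← integral_finsetSum s fun i hi => (hg i hi).abs]
  exact integral_mono (integrable_finsetSum s hg).abs
    (integrable_finsetSum s fun i hi => (hg i hi).abs) fun x => Finset.abs_sum_le_sum_abs _ _

theorem integral_abs_sum_divModEquiv_sub_le {α : Type*} [MeasurableSpace α] {ν : Measure α}
    {N : ℕ} [NeZero N] {g : ℕ × Fin N → α → ℝ} (hg : ∀ p, Integrable (g p) ν) (Q : ℕ) :
    ∫ x, |(∑ k ∈ Finset.range Q, g (Nat.divModEquiv N k)) x -
        (∑ n ∈ Finset.range (Q / N), ∑ j, g (n, j)) x| ∂ν ≤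
      ∑ j, ∫ x, |g (Q / N, j) x| ∂ν := by
  obtain ⟨q, m, hm, rfl⟩ : ∃ q m, m < N ∧ Q = q * N + m :=
    ⟨Q / N, Q % N, Nat.mod_lt Q (NeZero.pos N), (Nat.div_add_mod' Q N).symm⟩
  have hq : (q * N + m) / N = q := by
    rw [Nat.add_comm, Nat.add_mul_div_right _ _ (NeZero.pos N), Nat.div_eq_of_lt hm, zero_add]
  rw [hq, Finset.sum_range_add, Nat.sum_range_mul_divModEquiv]
  simp only [Pi.add_apply, add_sub_cancel_left, Finset.sum_apply]
  calc _ ≤ ∑ i ∈ Finset.range m, ∫ x, |g (Nat.divModEquiv N (q * N + i)) x| ∂ν :=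
        integral_abs_sum_le _ fun i _ => hg _
    _ ≤ ∑ i ∈ Finset.range N, ∫ x, |g (Nat.divModEquiv N (q * N + i)) x| ∂ν :=
        Finset.sum_le_sum_of_subset_of_nonneg (Finset.range_subset_range.2 hm.le)
          fun _ _ _ => integral_nonneg fun _ => abs_nonneg _
    _ = ∑ j, ∫ x, |g (q, j) x| ∂ν := by
        rw [← Fin.sum_univ_eq_sum_range (fun i => ∫ x, |g (Nat.divModEquiv N (q * N + i)) x| ∂ν)]
        simp only [Nat.divModEquiv_mul_add]

theorem tendsto_integral_abs_sub_of_le {α : Type*} [MeasurableSpace α] {ν : Measure α}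
    {f : α → ℝ} {S F : ℕ → α → ℝ} {ε : ℕ → ℝ} {φ : ℕ → ℕ} (hφ : Tendsto φ atTop atTop)
    (hf : Integrable f ν) (hS : ∀ q, Integrable (S q) ν) (hF : ∀ Q, Integrable (F Q) ν)
    (hlim : Tendsto (fun q => ∫ x, |f x - S q x| ∂ν) atTop (𝓝 0))
    (hε : Tendsto ε atTop (𝓝 0)) (hclose : ∀ Q, ∫ x, |F Q x - S (φ Q) x| ∂ν ≤ ε (φ Q)) :
    Tendsto (fun Q => ∫ x, |f x - F Q x| ∂ν) atTop (𝓝 0) := by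
  have hlim' := (hlim.add hε).comp hφ
  rw [add_zero] at hlim'
  refine squeeze_zero (fun Q => integral_nonneg fun _ => abs_nonneg _) (fun Q => ?_) hlim'
  have h₁ : Integrable (fun x => |f x - S (φ Q) x|) ν := (hf.sub (hS _)).abs
  have h₂ : Integrable (fun x => |F Q x - S (φ Q) x|) ν := ((hF Q).sub (hS _)).abs
  calc ∫ x, |f x - F Q x| ∂ν ≤ ∫ x, (|f x - S (φ Q) x| + |F Q x - S (φ Q) x|) ∂ν :=
        integral_mono (hf.sub (hF Q)).abs (h₁.add h₂)
          fun x => (abs_sub_le _ (S (φ Q) x) _).trans_eq (by rw [abs_sub_comm (S _ x)])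
    _ ≤ ∫ x, |f x - S (φ Q) x| ∂ν + ε (φ Q) := by
        rw [integral_add h₁ h₂]
        exact add_le_add_right (hclose Q) _

end Series

section Decomposition

variable {μ : Measure M} {r : ℝ≥0∞} {b c K : ℝ} {N : ℕ} {f : M → ℝ}

def IsAtomicDecomposition (μ : Measure M) (r : ℝ≥0∞) (b : ℝ) (f : M → ℝ) (cs : ℕ → ℝ)
    (as : ℕ → M → ℝ) : Prop :=
  (∀ n, IsAtomOn μ r b (as n)) ∧ Summable (fun n => |cs n|) ∧
    Tendsto (fun N => ∫ x, |f x - ∑ n ∈ Finset.range N, cs n * as n x| ∂μ) atTop (𝓝 0)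

theorem hardyNorm_eq : hardyNorm μ r b f =
    sInf {t | ∃ cs as, IsAtomicDecomposition μ r b f cs as ∧ ∑' n, |cs n| = t} := by
  simp only [hardyNorm, IsAtomicDecomposition, and_assoc]

theorem IsAtomicDecomposition.mono {cs : ℕ → ℝ} {as : ℕ → M → ℝ}
    (hd : IsAtomicDecomposition μ r c f cs as) (hcb : c ≤ b) :
    IsAtomicDecomposition μ r b f cs as :=
  ⟨fun n => (hd.1 n).mono hcb, hd.2⟩

theorem InHardy.mono (hf : InHardy μ r c f) (hcb : c ≤ b) : InHardy μ r b f :=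
  let ⟨cs, as, hd⟩ := hf
  ⟨cs, as, IsAtomicDecomposition.mono hd hcb⟩

theorem hardyNorm_le_tsum {cs : ℕ → ℝ} {as : ℕ → M → ℝ}
    (hd : IsAtomicDecomposition μ r b f cs as) : hardyNorm μ r b f ≤ ∑' n, |cs n| := by
  rw [hardyNorm_eq]
  refine csInf_le ⟨0, ?_⟩ ⟨cs, as, hd, rfl⟩
  rintro t ⟨cs, as, -, rfl⟩
  exact tsum_nonneg fun _ => abs_nonneg _

theorem hardyNorm_le_hardyNorm_of_le (hcb : c ≤ b) (hf : InHardy μ r c f) :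
    hardyNorm μ r b f ≤ hardyNorm μ r c f := by
  obtain ⟨cs, as, hd⟩ := hf
  rw [hardyNorm_eq (b := c)]
  refine le_csInf ⟨_, cs, as, hd, rfl⟩ ?_
  rintro t ⟨cs, as, hd, rfl⟩
  exact hardyNorm_le_tsum (hd.mono hcb)

theorem hardyNorm_le_mul_hardyNorm (hK : 0 < K) (hf : InHardy μ r b f)
    (htransfer : ∀ cs as, IsAtomicDecomposition μ r b f cs as →
      ∃ cs' as', IsAtomicDecomposition μ r c f cs' as' ∧ ∑' n, |cs' n| ≤ K * ∑' n, |cs n|) :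
    hardyNorm μ r c f ≤ K * hardyNorm μ r b f := by
  obtain ⟨cs, as, hd⟩ := hf
  rw [← div_le_iff₀' hK, hardyNorm_eq (b := b)]
  refine le_csInf ⟨_, cs, as, hd, rfl⟩ ?_
  rintro t ⟨cs, as, hd, rfl⟩
  obtain ⟨cs', as', hd', hle⟩ := htransfer cs as hd
  rw [div_le_iff₀' hK]
  exact (hardyNorm_le_tsum hd').trans hle

theorem IsAtomOn.integral_abs_smul_le [μ.IsOpenPosMeasure]
    (hμ : ∀ (x : M) (s : ℝ), μ (ball x s) < ⊤) (hr : 1 ≤ r) {a : M → ℝ}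
    (ha : IsAtomOn μ r c a) (t : ℝ) : ∫ x, |(t • a) x| ∂μ ≤ |t| := by
  simp only [Pi.smul_apply, smul_eq_mul, abs_mul, integral_const_mul]
  exact mul_le_of_le_one_right (abs_nonneg t) (ha.integral_abs_le_one hμ hr)

theorem IsAtomicDecomposition.exists_of_isAtomicSum [μ.IsOpenPosMeasure]
    (hμ : ∀ (x : M) (s : ℝ), μ (ball x s) < ⊤) (hr : 1 ≤ r) (hc : 0 < c) (hN : 0 < N)
    (hsplit : ∀ a, IsAtomOn μ r b a → IsAtomicSum μ r c K N a) (hf : Integrable f μ)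
    {cs : ℕ → ℝ} {as : ℕ → M → ℝ} (hd : IsAtomicDecomposition μ r b f cs as) :
    ∃ cs' as', IsAtomicDecomposition μ r c f cs' as' ∧ ∑' n, |cs' n| ≤ K * ∑' n, |cs n| := by
  obtain ⟨hatoms, hcs, hlim⟩ := hd
  obtain ⟨x₀, -⟩ := hatoms 0
  choose lam A hA hlam hdec using fun n => (hsplit _ (hatoms n)).exists_fin x₀ hc
  have : NeZero N := ⟨hN.ne'⟩
  set e := Nat.divModEquiv N
  set g : ℕ × Fin N → M → ℝ := fun p => (cs p.1 * lam p.1 p.2) • A p.1 p.2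
  have hg : ∀ p, Integrable (g p) μ := fun p => (hA _ _).integrable.smul _
  obtain ⟨hsum, htsum⟩ := summable_abs_mul_and_tsum_le hcs hlam
  refine ⟨fun k => cs (e k).1 * lam (e k).1 (e k).2, fun k => A (e k).1 (e k).2,
    ⟨fun k => hA _ _, e.summable_iff.2 hsum, ?_⟩, (e.tsum_eq _).trans_le htsum⟩
  refine tendsto_integral_abs_sub_of_le (Nat.tendsto_div_const_atTop hN.ne') hf
    (fun q => integrable_finsetSum _ fun n _ => (hatoms n).integrable.const_mul _)
    (fun Q => integrable_finsetSum _ fun k _ => (hA _ _).integrable.const_mul _) hlim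
    (by simpa using hcs.tendsto_atTop_zero.const_mul K) fun Q => ?_
  have hgn : ∀ n, ∑ j, g (n, j) = cs n • as n := fun n => by
    simp only [g, hdec, Finset.smul_sum, mul_smul]
  calc _ = ∫ x, |(∑ k ∈ Finset.range Q, g (e k)) x -
          (∑ n ∈ Finset.range (Q / N), ∑ j, g (n, j)) x| ∂μ := by
        simp only [hgn, Finset.sum_apply, Pi.smul_apply, smul_eq_mul, g]
    _ ≤ ∑ j, ∫ x, |g (Q / N, j) x| ∂μ := integral_abs_sum_divModEquiv_sub_le hg Q
    _ ≤ ∑ j, |cs (Q / N) * lam (Q / N) j| :=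
        Finset.sum_le_sum fun j _ => (hA _ _).integral_abs_smul_le hμ hr _
    _ ≤ K * |cs (Q / N)| := by
        simp only [abs_mul, ← Finset.mul_sum]
        rw [mul_comm]
        exact mul_le_mul_of_nonneg_right (hlam _) (abs_nonneg _)

end Decomposition

noncomputable def ballBump (μ : Measure M) (x : M) (ρ : ℝ) : M → ℝ :=
  (ball x ρ).indicator fun _ => (μ (ball x ρ)).toReal⁻¹

section BallBump

variable {μ : Measure M} {r : ℝ≥0∞} {x : M} {ρ : ℝ}

theorem ballBump_eq_zero {y : M} (hy : y ∉ ball x ρ) : ballBump μ x ρ y = 0 :=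
  Set.indicator_of_notMem hy _

theorem integrable_ballBump [BorelSpace M] (hμ : ∀ (x : M) (s : ℝ), μ (ball x s) < ⊤) :
    Integrable (ballBump μ x ρ) μ :=
  (integrable_indicator_iff measurableSet_ball).2 (integrableOn_const (hμ x ρ).ne)

theorem integral_ballBump [BorelSpace M] [μ.IsOpenPosMeasure]
    (hμ : ∀ (x : M) (s : ℝ), μ (ball x s) < ⊤) (hρ : 0 < ρ) :
    ∫ y, ballBump μ x ρ y ∂μ = 1 := by
  rw [ballBump, integral_indicator_const _ measurableSet_ball, smul_eq_mul, measureReal_def,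
    mul_inv_cancel₀ (ENNReal.toReal_ne_zero.2 ⟨(measure_ball_pos μ x hρ).ne', (hμ x ρ).ne⟩)]

theorem eLpNorm_ballBump_le [μ.IsOpenPosMeasure] (hρ : 0 < ρ) :
    eLpNorm (ballBump μ x ρ) r μ ≤ atomBound μ r (ball x ρ) := by
  refine (eLpNorm_indicator_const_le _ r).trans_eq ?_
  rw [atomBound, mul_comm, ← ofReal_norm, Real.norm_of_nonneg (by positivity),
    ← ENNReal.toReal_inv, ENNReal.ofReal_toReal (by simpa using (measure_ball_pos μ x hρ).ne'),
    ENNReal.toReal_div, ENNReal.toReal_one]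

end BallBump

section Chain

variable {μ : Measure M} {r : ℝ≥0∞} {c : ℝ}

theorem isAtomicSum_ballBump_sub [BorelSpace M] [μ.IsOpenPosMeasure]
    (hμ : ∀ (x : M) (s : ℝ), μ (ball x s) < ⊤) (hr : 1 ≤ r) {C : ℝ≥0} (hC1 : 1 ≤ C)
    {δ τ : ℝ} (hδ : 0 < δ) (hτ : 0 ≤ τ) (hC : ComparableBalls μ δ (τ + (τ + δ)) C) {x y : M}
    (hxy : dist x y ≤ τ) :
    IsAtomicSum μ r (τ + δ) (2 * C ^ 2) 1 (ballBump μ x δ - ballBump μ y δ) := by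
  have hc : 0 < τ + δ := by linarith
  have hC1' : (1 : ℝ≥0∞) ≤ C := by exact_mod_cast hC1
  have hxx : ball x δ ⊆ ball x (τ + δ) := ball_subset_ball (by linarith)
  have hyx : ball y δ ⊆ ball x (τ + δ) := ball_subset_ball' (by rw [dist_comm]; linarith)
  have hbound : ∀ z, dist x z ≤ τ → μ (ball z δ) ≤ μ (ball x (τ + δ)) →
      atomBound μ r (ball z δ) ≤ C ^ 2 * atomBound μ r (ball x (τ + δ)) := fun z hxz hle =>
    atomBound_le_sq_mul hr hC1' (measure_ball_pos μ z hδ).ne' (hμ z δ).ne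
      (measure_ball_pos μ x hc).ne' (hμ x _).ne (hle.trans (le_mul_of_one_le_left' hC1'))
      (hC x z δ (τ + δ) le_rfl (by linarith) (by linarith))
  refine isAtomicSum_of_eLpNorm_le (x := x) (by positivity) hc le_rfl (fun w hw => ?_)
    ((integrable_ballBump hμ).sub (integrable_ballBump hμ)) ?_ ?_
  · rw [Pi.sub_apply, ballBump_eq_zero fun h => hw (hxx h), ballBump_eq_zero fun h => hw (hyx h),
      sub_zero]
  · rw [integral_sub' (integrable_ballBump hμ) (integrable_ballBump hμ), integral_ballBump hμ hδ,
      integral_ballBump hμ hδ, sub_self]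
  · calc eLpNorm (ballBump μ x δ - ballBump μ y δ) r μ
        ≤ eLpNorm (ballBump μ x δ) r μ + eLpNorm (ballBump μ y δ) r μ :=
          eLpNorm_sub_le (integrable_ballBump hμ).aestronglyMeasurable
            (integrable_ballBump hμ).aestronglyMeasurable hr
      _ ≤ C ^ 2 * atomBound μ r (ball x (τ + δ)) + C ^ 2 * atomBound μ r (ball x (τ + δ)) :=
          add_le_add ((eLpNorm_ballBump_le hδ).trans (hbound x (by simp [hτ]) (measure_mono hxx)))
            ((eLpNorm_ballBump_le hδ).trans (hbound y hxy (measure_mono hyx)))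
      _ = ENNReal.ofReal (2 * C ^ 2) * atomBound μ r (ball x (τ + δ)) := by
          rw [ofReal_two_mul_sq]; ring

theorem isAtomicSum_sub_of_hasApproxMidpoints {φ : M → M → ℝ} {R₀ β τ K : ℝ} (hβ : 0 < β)
    (hR₀ : R₀ ≤ τ) (hAMP : HasApproxMidpoints M R₀ β)
    (hbase : ∀ x y : M, dist x y ≤ τ → IsAtomicSum μ r c K 1 (φ x - φ y)) :
    ∀ (k : ℕ) (x y : M), dist x y ≤ τ / β ^ k →
      IsAtomicSum μ r c (2 ^ k * K) (2 ^ k) (φ x - φ y)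
  | 0, x, y, hxy => by simpa using hbase x y (by simpa using hxy)
  | k + 1, x, y, hxy => by
    by_cases hτ : dist x y ≤ τ
    · have hK := (hbase x y hτ).nonneg
      exact (hbase x y hτ).mono (le_mul_of_one_le_left hK (one_le_pow₀ one_le_two))
        Nat.one_le_two_pow
    obtain ⟨z, s, hs, hxz, hyz⟩ := hAMP x y (hR₀.trans_lt (not_le.1 hτ))
    have hβd : β * dist x y ≤ τ / β ^ k := by
      rw [pow_succ, ← div_div, le_div_iff₀ hβ] at hxy
      linarith
    have hxz' : dist x z ≤ τ / β ^ k := by linarith [mem_ball.1 hxz]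
    have hzy' : dist z y ≤ τ / β ^ k := by linarith [mem_ball'.1 hyz]
    have := (isAtomicSum_sub_of_hasApproxMidpoints hβ hR₀ hAMP hbase k x z hxz').add
      (isAtomicSum_sub_of_hasApproxMidpoints hβ hR₀ hAMP hbase k z y hzy')
    rw [sub_add_sub_cancel, ← two_mul, ← mul_assoc, ← two_mul] at this
    simpa [pow_succ, mul_comm] using this

end Chain

section Covering

theorem exists_finset_cover_of_card_le {X : Type*} [PseudoMetricSpace X] {A : Set X} {ε : ℝ≥0}
    {n : ℕ}
    (h : ∀ F : Finset X, ↑F ⊆ A → IsSeparated (ε : ℝ≥0∞) (F : Set X) → F.card ≤ n) :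
    ∃ F : Finset X, F.card ≤ n ∧ ↑F ⊆ A ∧ A ⊆ ⋃ y ∈ F, closedBall y ε := by
  have hsep : ∀ C ⊆ A, IsSeparated (ε : ℝ≥0∞) C → C.encard ≤ n := by
    intro C hCA hC
    by_contra! hlt
    obtain ⟨t, htC, ht⟩ := Set.exists_subset_encard_eq (Order.add_one_le_of_lt hlt)
    have htfin : t.Finite := Set.finite_of_encard_eq_coe (k := n + 1) (by simpa using ht)
    have hcard := h htfin.toFinset (by simpa using htC.trans hCA) (by simpa using hC.subset htC)
    rw [htfin.encard_eq_coe_toFinset_card] at ht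
    have : htfin.toFinset.card = n + 1 := by exact_mod_cast ht
    omega
  have hpack : packingNumber ε A ≠ ⊤ :=
    ne_top_of_le_ne_top (ENat.natCast_ne_top n) (iSup₂_le fun C hCA => iSup_le (hsep C hCA))
  have hfin : (maximalSeparatedSet ε A).Finite :=
    Set.encard_ne_top_iff.1 (by rwa [encard_maximalSeparatedSet hpack])
  refine ⟨hfin.toFinset, ?_, by simpa using maximalSeparatedSet_subset, fun x hx => ?_⟩
  · have := hsep _ maximalSeparatedSet_subset isSeparated_maximalSeparatedSet
    rw [hfin.encard_eq_coe_toFinset_card] at this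
    exact_mod_cast this
  · obtain ⟨y, hy, hxy⟩ := isCover_maximalSeparatedSet hpack hx
    simp only [Set.Finite.mem_toFinset, mem_iUnion]
    exact ⟨y, hy, mem_closedBall.2 (by exact_mod_cast edist_le_coe.1 hxy)⟩

theorem exists_measurable_partition_subordinate {X ι : Type*} [MeasurableSpace X] [LinearOrder ι]
    [LocallyFiniteOrderBot ι] {A : Set X} (hA : MeasurableSet A) {U : ι → Set X}
    (hU : ∀ i, MeasurableSet (U i)) (hcover : A ⊆ ⋃ i, U i) :
    ∃ E : ι → Set X, (∀ i, MeasurableSet (E i)) ∧ (∀ i, E i ⊆ U i) ∧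
      Pairwise (Function.onFun Disjoint E) ∧ ⋃ i, E i = A :=
  ⟨fun i => A ∩ disjointed U i,
    fun i => hA.inter (disjointedRec (fun _ j ht => ht.diff (hU j)) (hU i)),
    fun i => inter_subset_right.trans (disjointed_le U i),
    (disjoint_disjointed U).mono fun _ _ => Disjoint.mono inter_subset_right inter_subset_right,
    by rw [← inter_iUnion, iUnion_disjointed, inter_eq_left.2 hcover]⟩

theorem sum_setIntegral_eq_integral_of_partition {X ι : Type*} [MeasurableSpace X] [Fintype ι]
    {ν : Measure X} {A : Set X} {E : ι → Set X} (hE : ∀ i, MeasurableSet (E i))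
    (hdisj : Pairwise (Function.onFun Disjoint E)) (hunion : ⋃ i, E i = A) {g : X → ℝ}
    (hg : Integrable g ν) (hgA : ∀ w, w ∉ A → g w = 0) :
    ∑ i, ∫ x in E i, g x ∂ν = ∫ x, g x ∂ν := by
  rw [← integral_iUnion_fintype hE hdisj fun i => hg.integrableOn, hunion,
    setIntegral_eq_integral_of_forall_compl_eq_zero hgA]

theorem sum_indicator_eq_self_of_partition {X ι : Type*} [Fintype ι] {A : Set X}
    {E : ι → Set X} (hdisj : Pairwise (Function.onFun Disjoint E)) (hunion : ⋃ i, E i = A)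
    {g : X → ℝ} (hg : ∀ w, w ∉ A → g w = 0) : ∑ i, (E i).indicator g = g := by
  ext w
  rw [Finset.sum_apply, ← Finset.indicator_biUnion_apply _ _ (hdisj.set_pairwise _)]
  simp only [Finset.mem_univ, iUnion_true, hunion]
  exact congrFun (indicator_eq_self.2 fun w hw => by_contra fun h => hw (hg w h)) w

variable {μ : Measure M} [BorelSpace M] [μ.IsOpenPosMeasure]

theorem ComparableBalls.card_le_of_isSeparated (hμ : ∀ (x : M) (s : ℝ), μ (ball x s) < ⊤)
    {ε : ℝ≥0} {s : ℝ} {C : ℝ≥0} (hC : ComparableBalls μ ε (3 * s) C) (hε : 0 < ε)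
    (hεs : ε ≤ s) {x₀ : M} {F : Finset M} (hF : ↑F ⊆ ball x₀ s)
    (hsep : IsSeparated ((2 * ε : ℝ≥0) : ℝ≥0∞) (F : Set M)) : F.card ≤ ⌊C⌋₊ := by
  have hs : 0 < s := lt_of_lt_of_le (by exact_mod_cast hε) hεs
  have hdisj : (F : Set M).PairwiseDisjoint fun p => ball p ε := fun p hp q hq hpq => by
    have : ((2 * ε : ℝ≥0) : ℝ≥0∞) < edist p q := hsep hp hq hpq
    rw [edist_nndist, ENNReal.coe_lt_coe, ← NNReal.coe_lt_coe] at this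
    exact ball_disjoint_ball (by push_cast at this; linarith)
  have hsub : (⋃ p ∈ F, ball p ε) ⊆ ball x₀ (2 * s) := by
    simp only [iUnion_subset_iff]
    intro p hp w hw
    have := mem_ball.1 (hF hp)
    rw [mem_ball] at hw ⊢
    linarith [dist_triangle w p x₀]
  have hcard : (F.card : ℝ≥0∞) * μ (ball x₀ (2 * s)) ≤ C * μ (ball x₀ (2 * s)) := calc
    (F.card : ℝ≥0∞) * μ (ball x₀ (2 * s)) = ∑ _p ∈ F, μ (ball x₀ (2 * s)) := by simp
    _ ≤ ∑ p ∈ F, C * μ (ball p ε) := Finset.sum_le_sum fun p hp =>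
        hC x₀ p ε (2 * s) le_rfl (by linarith) (by linarith [mem_ball'.1 (hF hp)])
    _ = C * μ (⋃ p ∈ F, ball p ε) := by
        rw [← Finset.mul_sum, measure_biUnion_finset hdisj fun _ _ => measurableSet_ball]
    _ ≤ C * μ (ball x₀ (2 * s)) := by gcongr
  rw [ENNReal.mul_le_mul_iff_left (measure_ball_pos μ x₀ (by positivity)).ne' (hμ _ _).ne] at hcard
  exact Nat.le_floor (by exact_mod_cast hcard)

theorem ComparableBalls.exists_partition_ball (hμ : ∀ (x : M) (s : ℝ), μ (ball x s) < ⊤)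
    {δ s : ℝ} {C : ℝ≥0} (hC : ComparableBalls μ (δ / 4) (3 * s) C) (hδ : 0 < δ) (hδs : δ ≤ s)
    (x₀ : M) :
    ∃ (n : ℕ) (y : Fin n → M) (E : Fin n → Set M), n ≤ ⌊C⌋₊ ∧ (∀ i, y i ∈ ball x₀ s) ∧
      (∀ i, MeasurableSet (E i)) ∧ (∀ i, E i ⊆ ball (y i) δ) ∧
      Pairwise (Function.onFun Disjoint E) ∧ ⋃ i, E i = ball x₀ s := by
  set ε : ℝ≥0 := ⟨δ / 4, by positivity⟩
  have hε : (ε : ℝ) = δ / 4 := rfl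
  obtain ⟨F, hFcard, hFB, hcover⟩ := exists_finset_cover_of_card_le (A := ball x₀ s)
    (ε := 2 * ε) fun F hF hsep => hC.card_le_of_isSeparated (ε := ε) hμ
      (NNReal.coe_pos.1 (by rw [hε]; positivity)) (by rw [hε]; linarith) hF hsep
  set y : Fin F.card → M := fun i => F.equivFin.symm i
  have hcover' : ball x₀ s ⊆ ⋃ i, ball (y i) δ := by
    refine hcover.trans (iUnion₂_subset fun z hz => ?_)
    have hzy : z = y (F.equivFin ⟨z, hz⟩) := by simp [y]
    rw [hzy]
    exact subset_iUnion_of_subset _ (closedBall_subset_ball (by push_cast; rw [hε]; linarith))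
  obtain ⟨E, hEm, hEy, hEdisj, hEU⟩ :=
    exists_measurable_partition_subordinate measurableSet_ball (fun _ => measurableSet_ball) hcover'
  exact ⟨F.card, y, E, hFcard, fun i => hFB (F.equivFin.symm i).2, hEm, hEy, hEdisj, hEU⟩

end Covering

section Split

variable {μ : Measure M} {r : ℝ≥0∞} [BorelSpace M] [μ.IsOpenPosMeasure]

theorem isAtomicSum_indicator_sub_smul_ballBump (hμ : ∀ (x : M) (s : ℝ), μ (ball x s) < ⊤)
    (hr : 1 ≤ r) {C : ℝ≥0} (hC1 : 1 ≤ C) {δ c s : ℝ} (hδ : 0 < δ) (hδc : δ ≤ c) (hcs : c ≤ s)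
    (hC : ComparableBalls μ δ (2 * s) C) {x₀ y : M} (hy : y ∈ ball x₀ s) {a : M → ℝ}
    (hint : Integrable a μ) (hnorm : eLpNorm a r μ ≤ atomBound μ r (ball x₀ s)) {E : Set M}
    (hE : MeasurableSet E) (hEy : E ⊆ ball y δ) (hm : |∫ x in E, a x ∂μ| ≤ 1) :
    IsAtomicSum μ r c (2 * C ^ 2) 1 (E.indicator a - (∫ x in E, a x ∂μ) • ballBump μ y δ) := by
  set m := ∫ x in E, a x ∂μ
  have hc : 0 < c := hδ.trans_le hδc
  have hC1' : (1 : ℝ≥0∞) ≤ C := by exact_mod_cast hC1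
  have hys := mem_ball'.1 hy
  have hyc : ball y δ ⊆ ball y c := ball_subset_ball hδc
  have hbig : atomBound μ r (ball x₀ s) ≤ C ^ 2 * atomBound μ r (ball y c) :=
    atomBound_le_sq_mul hr hC1' (measure_ball_pos μ x₀ (hc.trans_le hcs)).ne' (hμ _ _).ne
      (measure_ball_pos μ y hc).ne' (hμ _ _).ne
      (hC x₀ y c s hδc (by linarith) (by linarith))
      (hC y x₀ s c (hδc.trans hcs) (by linarith) (by rw [dist_comm]; linarith))
  have hsmall : atomBound μ r (ball y δ) ≤ C ^ 2 * atomBound μ r (ball y c) :=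
    atomBound_le_sq_mul hr hC1' (measure_ball_pos μ y hδ).ne' (hμ _ _).ne
      (measure_ball_pos μ y hc).ne' (hμ _ _).ne
      ((measure_mono hyc).trans (le_mul_of_one_le_left' hC1'))
      (hC y y δ c le_rfl (by linarith) (by simp; linarith))
  have hbump : Integrable (m • ballBump μ y δ) μ := (integrable_ballBump hμ).smul m
  refine isAtomicSum_of_eLpNorm_le (x := y) (by positivity) hc le_rfl (fun w hw => ?_)
    ((hint.indicator hE).sub hbump) ?_ ?_
  · rw [Pi.sub_apply, indicator_of_notMem fun h => hw (hyc (hEy h)), Pi.smul_apply,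
      ballBump_eq_zero fun h => hw (hyc h), smul_zero, sub_zero]
  · rw [integral_sub' (hint.indicator hE) hbump, integral_indicator hE]
    simp only [Pi.smul_apply, smul_eq_mul, integral_const_mul, integral_ballBump hμ hδ, mul_one,
      sub_self, m]
  · calc eLpNorm (E.indicator a - m • ballBump μ y δ) r μ
        ≤ eLpNorm (E.indicator a) r μ + eLpNorm (m • ballBump μ y δ) r μ :=
          eLpNorm_sub_le (hint.indicator hE).aestronglyMeasurable hbump.aestronglyMeasurable hr
      _ ≤ C ^ 2 * atomBound μ r (ball y c) + C ^ 2 * atomBound μ r (ball y c) := by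
          gcongr
          · exact (eLpNorm_indicator_le a).trans (hnorm.trans hbig)
          · rw [eLpNorm_const_smul]
            refine (mul_le_of_le_one_of_le ?_ (eLpNorm_ballBump_le hδ)).trans hsmall
            rw [← ofReal_norm, Real.norm_eq_abs]
            exact ENNReal.ofReal_le_one.2 hm
      _ = ENNReal.ofReal (2 * C ^ 2) * atomBound μ r (ball y c) := by
          rw [ofReal_two_mul_sq]; ring

theorem IsAtomOn.isAtomicSum_of_ballBump (hμ : ∀ (x : M) (s : ℝ), μ (ball x s) < ⊤)
    (hr : 1 ≤ r) {C : ℝ≥0} (hC1 : 1 ≤ C) {δ c b : ℝ} (hδ : 0 < δ) (hδc : δ ≤ c)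
    (hC : ComparableBalls μ (δ / 4) (3 * b) C) {KB : ℝ} {NB : ℕ}
    (hbump : ∀ x y : M, dist x y ≤ b →
      IsAtomicSum μ r c KB NB (ballBump μ x δ - ballBump μ y δ))
    {a : M → ℝ} (ha : IsAtomOn μ r b a) :
    IsAtomicSum μ r c (1 + ⌊C⌋₊ * (2 * C ^ 2) + KB) (⌊C⌋₊ * (1 + NB) + 1) a := by
  obtain ⟨x₀, s, hs, hsb, hsupp, hint, hmean, hnorm⟩ := ha
  have hKB : 0 ≤ KB := (hbump x₀ x₀ (by simp; linarith)).nonneg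
  obtain hsc | hsc := le_or_gt s c
  · exact (IsAtomOn.isAtomicSum ⟨x₀, s, hs, hsc, hsupp, hint, hmean, hnorm⟩).mono
      (le_add_of_le_of_nonneg (le_add_of_nonneg_right (by positivity)) hKB) (by omega)
  obtain ⟨n, y, E, hn, hy, hEm, hEy, hEdisj, hEU⟩ :=
    (hC.mono le_rfl (by linarith : 3 * s ≤ 3 * b)).exists_partition_ball hμ hδ (by linarith) x₀
  set m : Fin n → ℝ := fun i => ∫ x in E i, a x ∂μ
  have hm_abs : ∑ i, |m i| ≤ 1 := calc
    ∑ i, |m i| ≤ ∑ i, ∫ x in E i, |a x| ∂μ :=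
        Finset.sum_le_sum fun i _ => abs_integral_le_integral_abs
    _ = ∫ x, |a x| ∂μ := sum_setIntegral_eq_integral_of_partition hEm hEdisj hEU hint.abs
        fun w hw => by simp [hsupp w hw]
    _ ≤ 1 := IsAtomOn.integral_abs_le_one hμ hr ⟨x₀, s, hs, hsb, hsupp, hint, hmean, hnorm⟩
  -- `∑ m i = ∫ a = 0`, so the bumps at `x₀` cancel.
  have hsum : ∑ i, ((E i).indicator a - m i • ballBump μ (y i) δ +
      m i • (ballBump μ (y i) δ - ballBump μ x₀ δ)) = a := by
    simp only [smul_sub, sub_add_sub_cancel, Finset.sum_sub_distrib, ← Finset.sum_smul,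
      sum_setIntegral_eq_integral_of_partition hEm hEdisj hEU hint hsupp, hmean, m,
      zero_smul, sub_zero]
    exact sum_indicator_eq_self_of_partition hEdisj hEU hsupp
  have hpiece : ∀ i ∈ Finset.univ, IsAtomicSum μ r c (2 * C ^ 2 + |m i| * KB) (1 + NB)
      ((E i).indicator a - m i • ballBump μ (y i) δ +
        m i • (ballBump μ (y i) δ - ballBump μ x₀ δ)) := fun i _ =>
    (isAtomicSum_indicator_sub_smul_ballBump hμ hr hC1 hδ hδc hsc.le
      (hC.mono (by linarith) (by linarith)) (hy i) hint hnorm (hEm i) (hEy i)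
      ((Finset.single_le_sum (fun j _ => abs_nonneg (m j)) (Finset.mem_univ i)).trans hm_abs)).add
    ((hbump (y i) x₀ (by rw [dist_comm]; exact (mem_ball'.1 (hy i)).le.trans hsb)).smul (m i))
  have hn' : (n : ℝ) ≤ ⌊C⌋₊ := by exact_mod_cast hn
  rw [← hsum]
  refine (IsAtomicSum.sum Finset.univ hpiece).mono ?_ ?_
  · rw [Finset.sum_add_distrib, Finset.sum_const, Finset.card_univ, Fintype.card_fin,
      nsmul_eq_mul, ← Finset.sum_mul]
    nlinarith [mul_le_mul_of_nonneg_right hn' (by positivity : (0 : ℝ) ≤ 2 * C ^ 2),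
      mul_le_mul_of_nonneg_right hm_abs hKB]
  · rw [Finset.sum_const, Finset.card_univ, Fintype.card_fin, smul_eq_mul]
    exact (Nat.mul_le_mul_right _ hn).trans (Nat.le_succ _)

end Split

theorem exists_isAtomicSum_of_isAtomOn {μ : Measure M} {r : ℝ≥0∞} [BorelSpace M]
    [μ.IsOpenPosMeasure] (hμ : ∀ (x : M) (s : ℝ), μ (ball x s) < ⊤) (hLD : LocallyDoubling μ)
    {R₀ β : ℝ} (hβ₀ : 0 < β) (hβ₁ : β < 1) (hAMP : HasApproxMidpoints M R₀ β) (hr : 1 ≤ r)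
    {b c : ℝ} (hR₀ : 0 ≤ R₀) (hR₀c : R₀ < c) (hcb : c ≤ b) :
    ∃ (K : ℝ) (N : ℕ), 0 < K ∧ 0 < N ∧ ∀ a, IsAtomOn μ r b a → IsAtomicSum μ r c K N a := by
  set δ := (c - R₀) / 2 with hδ_def
  set τ := (c + R₀) / 2 with hτ_def
  have hδ : 0 < δ := by linarith
  have hτ : 0 < τ := by linarith
  have hR₀τ : R₀ ≤ τ := by linarith
  have hτδ : τ + δ = c := by linarith
  obtain ⟨C, hC1, hC⟩ := exists_comparableBalls hLD (ε := δ / 4) (by positivity) (3 * b)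
  obtain ⟨k, hk⟩ := exists_pow_lt_of_lt_one (show 0 < τ / b from div_pos hτ (by linarith)) hβ₁
  have hbump : ∀ x y : M, dist x y ≤ b →
      IsAtomicSum μ r c (2 ^ k * (2 * C ^ 2)) (2 ^ k) (ballBump μ x δ - ballBump μ y δ) := by
    intro x y hxy
    refine isAtomicSum_sub_of_hasApproxMidpoints (φ := fun x => ballBump μ x δ) hβ₀ hR₀τ hAMP
      (fun x y hxy => ?_) k x y (hxy.trans ?_)
    · simpa [hτδ] using isAtomicSum_ballBump_sub hμ hr hC1 hδ hτ.le
        (hC.mono (by linarith) (by linarith)) hxy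
    · rw [le_div_iff₀ (pow_pos hβ₀ k)]
      rw [lt_div_iff₀ (by linarith)] at hk
      linarith
  exact ⟨_, _, by positivity, Nat.succ_pos _, fun a ha =>
    ha.isAtomicSum_of_ballBump hμ hr hC1 hδ (by linarith) hC hbump⟩

theorem hardy_space_scale_invariance_general
    {M : Type*} [MetricSpace M] [MeasurableSpace M] [BorelSpace M]
    (μ : Measure M)
    (hpos : μ Set.univ ≠ 0)
    (hballs : ∀ (x : M) (r : ℝ), μ (Metric.ball x r) < ⊤)
    (hLD : ∀ b : ℝ, 0 < b → ∃ D : ℝ, ∀ (x : M) (s : ℝ), 0 < s → s ≤ b →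
      μ (Metric.ball x (2 * s)) ≤ ENNReal.ofReal D * μ (Metric.ball x s))
    (R₀ β : ℝ) (hR₀ : 0 ≤ R₀) (hβ₁ : 1 / 2 < β) (hβ₂ : β < 1)
    (hAMP : ∀ x y : M, R₀ < dist x y → ∃ (z : M) (s : ℝ),
      s < β * dist x y ∧ x ∈ Metric.ball z s ∧ y ∈ Metric.ball z s)
    (r : ℝ≥0∞) (hr : 1 < r)
    (b c : ℝ) (hc : R₀ / (1 - β) < c) (hcb : c < b) :
    ∃ C : ℝ, 0 < C ∧ ∀ f : M → ℝ, Integrable f μ →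
      (InHardy μ r c f ↔ InHardy μ r b f) ∧
      (InHardy μ r c f →
        hardyNorm μ r b f ≤ hardyNorm μ r c f ∧
        hardyNorm μ r c f ≤ C * hardyNorm μ r b f) := by
  have hβ₀ : 0 < β := by linarith
  have hR₀c : R₀ < c := (le_div_self hR₀ (by linarith) (by linarith)).trans_lt hc
  have : μ.IsOpenPosMeasure := isOpenPosMeasure_of_locallyDoubling hpos hLD
  obtain ⟨K, N, hK, hN, hsplit⟩ :=
    exists_isAtomicSum_of_isAtomOn hballs hLD hβ₀ hβ₂ hAMP hr.le hR₀ hR₀c hcb.le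
  have htransfer := fun f (hf : Integrable f μ) cs as (hd : IsAtomicDecomposition μ r b f cs as) =>
    hd.exists_of_isAtomicSum hballs hr.le (hR₀.trans_lt hR₀c) hN hsplit hf
  refine ⟨K, hK, fun f hf => ⟨⟨fun h => h.mono hcb.le, fun ⟨cs, as, hd⟩ => ?_⟩, fun h =>
    ⟨hardyNorm_le_hardyNorm_of_le hcb.le h,
      hardyNorm_le_mul_hardyNorm hK (h.mono hcb.le) (htransfer f hf)⟩⟩⟩
  obtain ⟨cs', as', hd', -⟩ := htransfer f hf cs as hd
  exact ⟨cs', as', hd'⟩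

/-- In an unbounded, locally doubling metric measure space with the
approximate midpoint property (constants `R₀ ≥ 0`, `β ∈ (1/2,1)`), for
`r ∈ (1,∞]` and `R₀/(1−β) < c < b`, the Hardy spaces `H_c^{1,r}(μ)` and
`H_b^{1,r}(μ)` contain the same functions and their norms are equivalent:
`‖f‖_{H_b} ≤ ‖f‖_{H_c} ≤ C·‖f‖_{H_b}`. -/
theorem hardy_space_scale_invariance
    {M : Type*} [MetricSpace M] [MeasurableSpace M] [BorelSpace M]
    (μ : Measure M)
    (hpos : μ Set.univ ≠ 0)
    (hballs : ∀ (x : M) (r : ℝ), μ (Metric.ball x r) < ⊤)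
    (hunb : ¬ Bornology.IsBounded (Set.univ : Set M))
    (hLD : ∀ b : ℝ, 0 < b → ∃ D : ℝ, ∀ (x : M) (s : ℝ), 0 < s → s ≤ b →
      μ (Metric.ball x (2 * s)) ≤ ENNReal.ofReal D * μ (Metric.ball x s))
    (R₀ β : ℝ) (hR₀ : 0 ≤ R₀) (hβ₁ : 1 / 2 < β) (hβ₂ : β < 1)
    (hAMP : ∀ x y : M, R₀ < dist x y → ∃ (z : M) (s : ℝ),
      s < β * dist x y ∧ x ∈ Metric.ball z s ∧ y ∈ Metric.ball z s)
    (r : ℝ≥0∞) (hr : 1 < r)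
    (b c : ℝ) (hc : R₀ / (1 - β) < c) (hcb : c < b) :
    ∃ C : ℝ, 0 < C ∧ ∀ f : M → ℝ, Integrable f μ →
      (InHardy μ r c f ↔ InHardy μ r b f) ∧
      (InHardy μ r c f →
        hardyNorm μ r b f ≤ hardyNorm μ r c f ∧
        hardyNorm μ r c f ≤ C * hardyNorm μ r b f) :=
  hardy_space_scale_invariance_general μ hpos hballs hLD R₀ β hR₀ hβ₁ hβ₂ hAMP r hr b c hc hcb
end
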